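/- arXiv:dg-ga/9510003 — 8 statements merged into one kernel-verified Lean document; each statement's English description precedes it below -/
import Mathlib

section
/- Let a, p₀, p₁, p₂ be polynomials over ℂ with a and p₀ coprime (IsCoprime a p₀). If a divides the Wronskian W(p₀,p₁) = p₀·p₁' − p₁·p₀' and a divides W(p₀,p₂) = p₀·p₂' − p₂·p₀', then a divides W(p₁,p₂) = p₁·p₂' − p₂·p₁'. Consequently, a divides all three Wronskians W(p₀,p₁), W(p₀,p₂), W(p₁,p₂) if and only if a divides W(p₀,p₁) and a divides W(p₀,p₂). -/
open Polynomial

namespace Polynomial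

variable {R : Type*} [CommRing R]

theorem mul_derivative_sub_mul_derivative_eq_wronskian (p q : R[X]) :
    p * derivative q - q * derivative p = wronskian p q := by
  rw [wronskian, mul_comm q]

theorem mul_wronskian_sub_mul_wronskian (p₀ p₁ p₂ : R[X]) :
    p₁ * wronskian p₀ p₂ - p₂ * wronskian p₀ p₁ = p₀ * wronskian p₁ p₂ := by
  simp only [wronskian]
  ring

theorem dvd_wronskian_of_isCoprime {a p₀ p₁ p₂ : R[X]} (hcop : IsCoprime a p₀)
    (h₁ : a ∣ wronskian p₀ p₁) (h₂ : a ∣ wronskian p₀ p₂) : a ∣ wronskian p₁ p₂ := by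
  apply hcop.dvd_of_dvd_mul_left
  rw [← mul_wronskian_sub_mul_wronskian]
  exact dvd_sub (dvd_mul_of_dvd_right h₂ _) (dvd_mul_of_dvd_right h₁ _)

end Polynomial

/-- Lemma 3.2: if `a` is coprime to `p₀` and divides the Wronskians `W(p₀,p₁)` and
`W(p₀,p₂)`, then it divides `W(p₁,p₂)`; consequently `a` divides all three Wronskians
iff it divides `W(p₀,p₁)` and `W(p₀,p₂)`. -/
theorem wronskian_dvd_of_coprime (a p₀ p₁ p₂ : Polynomial ℂ) (hcop : IsCoprime a p₀) :
    ((a ∣ p₀ * derivative p₁ - p₁ * derivative p₀ ∧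
      a ∣ p₀ * derivative p₂ - p₂ * derivative p₀) →
      a ∣ p₁ * derivative p₂ - p₂ * derivative p₁) ∧
    ((a ∣ p₀ * derivative p₁ - p₁ * derivative p₀ ∧
      a ∣ p₀ * derivative p₂ - p₂ * derivative p₀ ∧
      a ∣ p₁ * derivative p₂ - p₂ * derivative p₁) ↔
     (a ∣ p₀ * derivative p₁ - p₁ * derivative p₀ ∧
      a ∣ p₀ * derivative p₂ - p₂ * derivative p₀)) := by
  simp only [mul_derivative_sub_mul_derivative_eq_wronskian]
  have key := dvd_wronskian_of_isCoprime (p₁ := p₁) (p₂ := p₂) hcop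
  exact ⟨fun ⟨h₁, h₂⟩ => key h₁ h₂,
    fun ⟨h₁, h₂, _⟩ => ⟨h₁, h₂⟩, fun ⟨h₁, h₂⟩ => ⟨h₁, h₂, key h₁ h₂⟩⟩
end

section
/- Let k, r be natural numbers with 2r ≤ k + 1. Let a be a monic polynomial over ℂ of degree r and p₀ a monic squarefree polynomial over ℂ of degree k, with a and p₀ coprime (IsCoprime a p₀). Then the ℂ-linear subspace of the space of polynomials of degree < k+1 consisting of those p with a ∣ (p₀·p' − p₀'·p) has dimension (finrank over ℂ) equal to k + 1 − r. -/
open Polynomial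

/-- The linear map `p ↦ p₀ * p' - p₀' * p`. -/
noncomputable def wronskianMap (p₀ : Polynomial ℂ) : Polynomial ℂ →ₗ[ℂ] Polynomial ℂ where
  toFun p := p₀ * derivative p - derivative p₀ * p
  map_add' p q := by simp only [derivative_add]; ring
  map_smul' c p := by
    simp only [derivative_smul, RingHom.id_apply, smul_sub, mul_smul_comm, smul_mul_assoc]

/-- The subspace of polynomials `p` of degree `< n` with `a ∣ p₀ * p' - p₀' * p`. -/
noncomputable def wronskianKer (a p₀ : Polynomial ℂ) (n : ℕ) : Submodule ℂ (Polynomial ℂ) :=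
  Polynomial.degreeLT ℂ n ⊓
    Submodule.comap (wronskianMap p₀) ((Ideal.span {a}).restrictScalars ℂ)

lemma wron_dvd_of_dvd (p₀ p : Polynomial ℂ) (α : ℂ) (m : ℕ) (c : ℂ)
    (h : (X - C α)^(m+1) ∣ p - C c * p₀) :
    (X - C α)^m ∣ p₀ * derivative p - derivative p₀ * p := by
  obtain ⟨s, hs⟩ := h
  have hp : p = C c * p₀ + (X - C α)^(m+1) * s := by linear_combination hs
  refine ⟨p₀ * (C ((m:ℂ)+1) * s + (X - C α) * derivative s)
    - derivative p₀ * ((X - C α) * s), ?_⟩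
  rw [hp, derivative_add, derivative_mul, derivative_mul, derivative_C, derivative_pow,
    derivative_sub, derivative_X, derivative_C]
  push_cast
  ring

set_option maxHeartbeats 1000000 in
lemma exists_c_of_wron_dvd (p₀ p : Polynomial ℂ) (α : ℂ) (h0 : p₀.eval α ≠ 0) (m : ℕ)
    (h : (X - C α)^m ∣ p₀ * derivative p - derivative p₀ * p) :
    ∃ c : ℂ, (X - C α)^(m+1) ∣ p - C c * p₀ := by
  refine ⟨p.eval α / p₀.eval α, ?_⟩
  set g := p - C (p.eval α / p₀.eval α) * p₀ with hgdef
  by_cases hgz : g = 0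
  · rw [hgz]; exact dvd_zero _
  have hgW : p₀ * derivative g - derivative p₀ * g
      = p₀ * derivative p - derivative p₀ * p := by
    rw [hgdef, derivative_sub, derivative_mul, derivative_C]; ring
  have hroot : g.eval α = 0 := by
    simp only [hgdef, eval_sub, eval_mul, eval_C]
    field_simp
    ring
  have hn1 : 1 ≤ rootMultiplicity α g := by
    rw [le_rootMultiplicity_iff hgz, pow_one, dvd_iff_isRoot]
    exact hroot
  obtain ⟨q, hq, hndvd⟩ := g.exists_eq_pow_rootMultiplicity_mul_and_not_dvd hgz α
  have hqα : q.eval α ≠ 0 := fun hh => hndvd (dvd_iff_isRoot.2 hh)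
  have hdvd : (X - C α)^m ∣ p₀ * derivative g - derivative p₀ * g := hgW ▸ h
  obtain ⟨t, ht⟩ : ∃ t, rootMultiplicity α g = t + 1 := ⟨rootMultiplicity α g - 1, by omega⟩
  suffices hs : m + 1 ≤ rootMultiplicity α g by
    exact dvd_trans (pow_dvd_pow _ hs) (g.pow_rootMultiplicity_dvd α)
  by_contra hcon
  push_neg at hcon
  rw [ht] at hq hcon
  have hWg : p₀ * derivative g - derivative p₀ * g
      = (X - C α)^t * (C ((t:ℂ)+1) * (p₀ * q)
          + (X - C α) * (p₀ * derivative q - derivative p₀ * q)) := by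
    rw [hq, derivative_mul, derivative_pow, derivative_sub, derivative_X, derivative_C]
    simp only [Nat.add_sub_cancel]
    push_cast
    ring
  have hd2 : (X - C α)^t * (X - C α) ∣ (X - C α)^t * (C ((t:ℂ)+1) * (p₀ * q)
      + (X - C α) * (p₀ * derivative q - derivative p₀ * q)) := by
    rw [← hWg, ← pow_succ]
    exact dvd_trans (pow_dvd_pow _ (by omega)) hdvd
  have hd3 := (mul_dvd_mul_iff_left (pow_ne_zero t (X_sub_C_ne_zero α))).1 hd2
  have hev := dvd_iff_isRoot.1 hd3
  simp only [IsRoot, eval_add, eval_mul, eval_sub, eval_C, eval_X, sub_self, zero_mul,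
    add_zero] at hev
  rcases mul_eq_zero.1 hev with h1 | h2
  · exact (Nat.cast_add_one_ne_zero t) h1
  · rcases mul_eq_zero.1 h2 with h3 | h4
    · exact h0 h3
    · exact hqα h4

set_option maxHeartbeats 1000000 in
set_option synthInstance.maxHeartbeats 400000 in
/-- Lemma 3.3: if `2r ≤ k+1`, `a` is monic of degree `r`, `p₀` monic squarefree of degree
`k`, and `a`, `p₀` are coprime, then the space of polynomials `p` of degree `< k+1` with
`a ∣ p₀ * p' - p₀' * p` has dimension `k + 1 - r`. -/
theorem finrank_wronskianKer (k r : ℕ) (hkr : 2 * r ≤ k + 1) (a p₀ : Polynomial ℂ)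
    (ha : a.Monic) (hadeg : a.natDegree = r)
    (hp₀ : p₀.Monic) (hp₀sq : Squarefree p₀) (hp₀deg : p₀.natDegree = k)
    (hcop : IsCoprime a p₀) :
    Module.finrank ℂ (wronskianKer a p₀ (k + 1)) = k + 1 - r := by
  classical
  have ha0 : a ≠ 0 := ha.ne_zero
  set t : Finset ℂ := a.roots.toFinset with ht
  set m : ℂ → ℕ := fun α => a.rootMultiplicity α with hm
  set s : ℕ := t.card with hs
  have hsplit : a = ∏ α ∈ t, (X - C α) ^ m α := by
    conv_lhs => rw [(IsAlgClosed.splits a).eq_prod_roots_of_monic ha]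
    rw [prod_multiset_root_eq_finset_root]
  have hroots_card : a.roots.card = r := by
    rw [← hadeg]
    exact (splits_iff_card_roots.mp (IsAlgClosed.splits a))
  have hs_le : s ≤ r := by rw [← hroots_card]; exact Multiset.toFinset_card_le _
  have hsum : ∑ α ∈ t, m α = r := by
    rw [← hroots_card, ht]
    simp only [hm, ← Polynomial.count_roots]
    exact Multiset.toFinset_sum_count_eq _
  have heval : ∀ α ∈ t, p₀.eval α ≠ 0 := by
    intro α hα hev
    have haev : a.eval α = 0 := by
      rw [ht, Multiset.mem_toFinset, mem_roots ha0] at hα; exact hα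
    have : IsCoprime (a.eval α) (p₀.eval α) := hcop.map (evalRingHom α)
    rw [haev, hev] at this
    exact not_isUnit_zero (isCoprime_zero_left.mp this)
  set b : Polynomial ℂ := ∏ α ∈ t, (X - C α) ^ (m α + 1) with hb
  have hbmonic : b.Monic := monic_prod_of_monic _ _ fun α _ => (monic_X_sub_C α).pow _
  have hbdeg : b.natDegree = r + s := by
    rw [hb, natDegree_prod _ _ (fun α _ => pow_ne_zero _ (X_sub_C_ne_zero α))]
    simp only [natDegree_pow, natDegree_X_sub_C, mul_one]
    rw [Finset.sum_add_distrib, hsum, Finset.sum_const, smul_eq_mul, mul_one]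
  have hds : r + s ≤ k + 1 := le_trans (by omega) hkr
  have hpair : ∀ (e : ℂ → ℕ), (Set.Pairwise ↑t (Function.onFun IsCoprime fun α => (X - C α) ^ e α)) := by
    intro e α _ β _ hαβ
    exact (pairwise_coprime_X_sub_C Function.injective_id hαβ).pow
  set I : {x // x ∈ t} → Ideal (Polynomial ℂ) :=
    fun α => Ideal.span {(X - C α.1) ^ (m α.1 + 1)} with hI
  set Φ : Polynomial ℂ →ₗ[ℂ] ((α : {x // x ∈ t}) → Polynomial ℂ ⧸ I α) :=
    LinearMap.pi (fun α => (Ideal.Quotient.mkₐ ℂ (I α)).toLinearMap) with hΦ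
  set S : Submodule ℂ ((α : {x // x ∈ t}) → Polynomial ℂ ⧸ I α) :=
    Submodule.pi Set.univ (fun α => Submodule.span ℂ {Ideal.Quotient.mk (I α) p₀}) with hS
  set V : Submodule ℂ (Polynomial ℂ) := degreeLT ℂ (k+1) with hV
  haveI hfdV : FiniteDimensional ℂ V := by
    rw [hV]; exact Module.Finite.equiv (degreeLTEquiv ℂ (k+1)).symm
  -- Step A : kernel description
  have hsmul : ∀ (β : {x // x ∈ t}) (c : ℂ) (q : Polynomial ℂ),
      c • Ideal.Quotient.mk (I β) q = Ideal.Quotient.mk (I β) (C c * q) := by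
    intro β c q
    rw [← smul_eq_C_mul, ← Ideal.Quotient.mkₐ_eq_mk ℂ, map_smul]
  have hcomap : Submodule.comap (wronskianMap p₀) ((Ideal.span {a}).restrictScalars ℂ)
      = Submodule.comap Φ S := by
    ext p
    simp only [Submodule.mem_comap, Submodule.restrictScalars_mem, Ideal.mem_span_singleton]
    have hWrw : wronskianMap p₀ p = p₀ * derivative p - derivative p₀ * p := rfl
    rw [hWrw, hΦ, hS, Submodule.mem_pi]
    constructor
    · intro hdvd α _
      obtain ⟨c, hc⟩ := exists_c_of_wron_dvd p₀ p α.1 (heval α.1 α.2) (m α.1)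
        (dvd_trans (hsplit ▸ Finset.dvd_prod_of_mem _ α.2) hdvd)
      have h0 : Ideal.Quotient.mk (I α) (p - C c * p₀) = 0 :=
        Ideal.Quotient.eq_zero_iff_mem.2 (by rw [hI]; exact Ideal.mem_span_singleton.2 hc)
      refine Submodule.mem_span_singleton.2 ⟨c, ?_⟩
      rw [hsmul]
      show Ideal.Quotient.mk (I α) (C c * p₀) = LinearMap.pi
        (fun α => (Ideal.Quotient.mkₐ ℂ (I α)).toLinearMap) p α
      rw [map_sub, sub_eq_zero] at h0
      rw [← h0]; rfl
    · intro hmem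
      rw [hsplit]
      refine Finset.prod_dvd_of_coprime (hpair m) (fun α hα => ?_)
      obtain ⟨c, hc⟩ := Submodule.mem_span_singleton.1 (hmem ⟨α, hα⟩ trivial)
      refine wron_dvd_of_dvd p₀ p α (m α) c ?_
      rw [hsmul] at hc
      have h00 : Ideal.Quotient.mk (I ⟨α, hα⟩) (p - C c * p₀) = 0 := by
        have hc' : Ideal.Quotient.mk (I ⟨α, hα⟩) (C c * p₀)
            = Ideal.Quotient.mk (I ⟨α, hα⟩) p := hc
        rw [map_sub, hc', sub_self]
      have h01 := Ideal.Quotient.eq_zero_iff_mem.1 h00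
      rw [hI] at h01
      exact Ideal.mem_span_singleton.1 h01
  have hKer : wronskianKer a p₀ (k+1) = V ⊓ Submodule.comap Φ S := by
    rw [wronskianKer, hcomap, ← hV]
  -- Step B : surjectivity onto the product of quotients
  have hIpair : Pairwise (Function.onFun IsCoprime I) := by
    intro α β hαβ
    rw [hI]
    simp only [Function.onFun]
    rw [Ideal.isCoprime_span_singleton_iff]
    exact (pairwise_coprime_X_sub_C Function.injective_id (Subtype.coe_injective.ne hαβ)).pow
  have hsurj : ∀ y, ∃ p ∈ V, Φ p = y := by
    intro x
    obtain ⟨p, hp⟩ := Ideal.pi_quotient_surjective hIpair x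
    refine ⟨p %ₘ b, ?_, ?_⟩
    · rw [hV, mem_degreeLT]
      calc (p %ₘ b).degree < b.degree := degree_modByMonic_lt p hbmonic
        _ ≤ ((k+1 : ℕ) : WithBot ℕ) := by
            rw [degree_eq_natDegree hbmonic.ne_zero, hbdeg]
            exact_mod_cast hds
    · rw [hΦ]
      funext α
      show Ideal.Quotient.mk (I α) (p %ₘ b) = x α
      rw [← hp α]
      have hmk : (p : Polynomial ℂ ⧸ I α) = Ideal.Quotient.mk (I α) p := rfl
      rw [hmk, Ideal.Quotient.eq]
      have hsub : p %ₘ b - p = -(b * (p /ₘ b)) := by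
        rw [modByMonic_eq_sub_mul_div p b]; ring
      rw [hsub, hI]
      exact neg_mem (Ideal.mem_span_singleton.2
        (dvd_mul_of_dvd_left (hb ▸ Finset.dvd_prod_of_mem _ α.2) _))
  -- Step C : dimension of V ⊓ ker Φ
  have hNrank : Module.finrank ℂ (V ⊓ LinearMap.ker Φ : Submodule ℂ (Polynomial ℂ))
      = k + 1 - (r + s) := by
    set n' := k + 1 - (r + s) with hn'
    set μ : Polynomial ℂ →ₗ[ℂ] Polynomial ℂ := LinearMap.mulLeft ℂ b with hμ
    have hker : ∀ z : Polynomial ℂ, Φ z = 0 ↔ ∀ α ∈ t, (X - C α) ^ (m α + 1) ∣ z := by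
      intro z
      rw [hΦ]
      constructor
      · intro h α hα
        have h0 : Ideal.Quotient.mk (I ⟨α, hα⟩) z = 0 := congrFun h ⟨α, hα⟩
        rw [Ideal.Quotient.eq_zero_iff_mem, hI] at h0
        exact Ideal.mem_span_singleton.1 h0
      · intro h
        funext α
        show Ideal.Quotient.mk (I α) z = 0
        rw [Ideal.Quotient.eq_zero_iff_mem, hI]
        exact Ideal.mem_span_singleton.2 (h α.1 α.2)
    have h1 : ∀ x ∈ degreeLT ℂ n',
        μ x ∈ (V ⊓ LinearMap.ker Φ : Submodule ℂ (Polynomial ℂ)) := by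
      intro x hx
      have hμx : μ x = b * x := rfl
      rw [Submodule.mem_inf]
      constructor
      · rw [hV, mem_degreeLT]
        rw [mem_degreeLT] at hx
        by_cases hx0 : x = 0
        · rw [hμx, hx0, mul_zero]
          exact (WithBot.bot_lt_coe _)
        · have hbx : b * x ≠ 0 := mul_ne_zero hbmonic.ne_zero hx0
          rw [hμx, ← natDegree_lt_iff_degree_lt hbx, natDegree_mul hbmonic.ne_zero hx0,
            hbdeg]
          have := (natDegree_lt_iff_degree_lt hx0).2 hx
          omega
      · rw [LinearMap.mem_ker, hker, hμx]
        intro α hα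
        exact dvd_mul_of_dvd_left (hb ▸ Finset.dvd_prod_of_mem _ hα) _
    set e : degreeLT ℂ n' →ₗ[ℂ] (V ⊓ LinearMap.ker Φ : Submodule ℂ (Polynomial ℂ)) :=
      μ.restrict h1 with he
    have hinj : Function.Injective e := by
      intro x y hxy
      have : b * (x : Polynomial ℂ) = b * (y : Polynomial ℂ) :=
        congrArg (fun z => ((z : (V ⊓ LinearMap.ker Φ : Submodule ℂ (Polynomial ℂ))) :
          Polynomial ℂ)) hxy
      exact Subtype.ext (mul_left_cancel₀ hbmonic.ne_zero this)
    have hsurjE : Function.Surjective e := by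
      rintro ⟨z, hz⟩
      rw [Submodule.mem_inf] at hz
      obtain ⟨hzV, hzker⟩ := hz
      have hdvd : b ∣ z := by
        rw [hb]
        exact Finset.prod_dvd_of_coprime (hpair (fun α => m α + 1))
          (fun α hα => (hker z).1 (LinearMap.mem_ker.1 hzker) α hα)
      obtain ⟨q, hq⟩ := hdvd
      have hqmem : q ∈ degreeLT ℂ n' := by
        rw [mem_degreeLT]
        by_cases hq0 : q = 0
        · rw [hq0]; exact (degree_zero : (0:Polynomial ℂ).degree = ⊥) ▸ WithBot.bot_lt_coe _
        · have hz0 : z ≠ 0 := by rw [hq]; exact mul_ne_zero hbmonic.ne_zero hq0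
          rw [← natDegree_lt_iff_degree_lt hq0]
          have hzdeg : z.natDegree < k + 1 := by
            rw [natDegree_lt_iff_degree_lt hz0]
            rw [hV, mem_degreeLT] at hzV; exact hzV
          rw [hq, natDegree_mul hbmonic.ne_zero hq0, hbdeg] at hzdeg
          omega
      refine ⟨⟨q, hqmem⟩, ?_⟩
      apply Subtype.ext
      show b * q = z
      rw [hq]
    rw [← LinearEquiv.finrank_eq (LinearEquiv.ofBijective e ⟨hinj, hsurjE⟩)]
    rw [(degreeLTEquiv ℂ n').finrank_eq]
    simp
  -- Step D : dimension of S
  have hSrank : Module.finrank ℂ S = s := by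
    have hmk0 : ∀ α : {x // x ∈ t}, Ideal.Quotient.mk (I α) p₀ ≠ 0 := by
      intro α h
      rw [Ideal.Quotient.eq_zero_iff_mem, hI, Ideal.mem_span_singleton] at h
      exact heval α.1 α.2 (dvd_iff_isRoot.1
        (dvd_trans (dvd_pow_self _ (Nat.succ_ne_zero _)) h))
    set ψ : ({x // x ∈ t} → ℂ) →ₗ[ℂ] ((α : {x // x ∈ t}) → Polynomial ℂ ⧸ I α) :=
      LinearMap.pi (fun α => (LinearMap.toSpanSingleton ℂ _
        (Ideal.Quotient.mk (I α) p₀)).comp (LinearMap.proj α)) with hψ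
    have hψapp : ∀ (c : {x // x ∈ t} → ℂ) (α : {x // x ∈ t}),
        ψ c α = c α • Ideal.Quotient.mk (I α) p₀ := fun c α => rfl
    have hinj : Function.Injective ψ := by
      intro c c' h
      funext α
      have hcc := congrFun h α
      rw [hψapp, hψapp] at hcc
      have h2 : (c α - c' α) • Ideal.Quotient.mk (I α) p₀ = 0 := by
        rw [sub_smul, hcc, sub_self]
      rcases smul_eq_zero.1 h2 with h3 | h4
      · exact sub_eq_zero.1 h3
      · exact absurd h4 (hmk0 α)
    have hrange : LinearMap.range ψ = S := by
      ext x
      rw [hS]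
      constructor
      · rintro ⟨c, rfl⟩ α _
        rw [hψapp]
        exact Submodule.smul_mem _ _ (Submodule.mem_span_singleton_self _)
      · intro hx
        rw [Submodule.mem_pi] at hx
        choose c hc using fun α => Submodule.mem_span_singleton.1 (hx α trivial)
        exact ⟨c, funext fun α => by rw [hψapp, hc]⟩
    rw [← hrange, LinearMap.finrank_range_of_inj hinj]
    rw [Module.finrank_pi, Fintype.card_coe, hs]
  -- Step E : assemble
  haveI : FiniteDimensional ℂ (V ⊓ Submodule.comap Φ S : Submodule ℂ (Polynomial ℂ)) :=
    Submodule.finiteDimensional_of_le inf_le_left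
  have hsub : ∀ x ∈ (V ⊓ Submodule.comap Φ S : Submodule ℂ (Polynomial ℂ)), Φ x ∈ S :=
    fun x hx => hx.2
  set g : (V ⊓ Submodule.comap Φ S : Submodule ℂ (Polynomial ℂ)) →ₗ[ℂ] S :=
    Φ.restrict hsub with hg
  have hgsurj : Function.Surjective g := by
    rintro ⟨y, hy⟩
    obtain ⟨p, hpV, hpy⟩ := hsurj y
    refine ⟨⟨p, hpV, ?_⟩, ?_⟩
    · exact Submodule.mem_comap.2 (hpy ▸ hy)
    · apply Subtype.ext
      show Φ p = y
      exact hpy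
  have hle2 : (V ⊓ LinearMap.ker Φ : Submodule ℂ (Polynomial ℂ))
      ≤ V ⊓ Submodule.comap Φ S := by
    refine inf_le_inf (le_refl _) ?_
    intro x hx
    rw [Submodule.mem_comap, LinearMap.mem_ker.1 hx]
    exact S.zero_mem
  have hkerg : Module.finrank ℂ (LinearMap.ker g)
      = Module.finrank ℂ (V ⊓ LinearMap.ker Φ : Submodule ℂ (Polynomial ℂ)) := by
    have heq : LinearMap.ker g
        = Submodule.comap (V ⊓ Submodule.comap Φ S : Submodule ℂ (Polynomial ℂ)).subtype
            (V ⊓ LinearMap.ker Φ) := by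
      ext x
      simp only [LinearMap.mem_ker, Submodule.mem_comap, Submodule.mem_inf,
        Submodule.subtype_apply]
      constructor
      · intro hx
        refine ⟨x.2.1, ?_⟩
        have : (g x : (α : {x // x ∈ t}) → Polynomial ℂ ⧸ I α) = 0 := by rw [hx]; rfl
        exact this
      · intro hx
        apply Subtype.ext
        exact hx.2
    rw [heq]
    exact LinearEquiv.finrank_eq (Submodule.comapSubtypeEquivOfLe hle2)
  have hmain : Module.finrank ℂ (V ⊓ Submodule.comap Φ S : Submodule ℂ (Polynomial ℂ))
      = Module.finrank ℂ S
        + Module.finrank ℂ (V ⊓ LinearMap.ker Φ : Submodule ℂ (Polynomial ℂ)) := by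
    have h1 := LinearMap.finrank_range_add_finrank_ker (K := ℂ) (V := (V ⊓ Submodule.comap Φ S : Submodule ℂ (Polynomial ℂ))) (V₂ := S) g
    rw [LinearMap.range_eq_top.2 hgsurj] at h1
    have h3 := finrank_top ℂ (↥S)
    omega
  rw [hKer, hmain, hSrank, hNrank]
  omega
end

section
/- Let k, r be natural numbers with 2r ≤ k + 1. Let a be a monic polynomial over ℂ of degree r and p₀ a monic squarefree polynomial over ℂ of degree k, with a and p₀ coprime (IsCoprime a p₀). Then for every polynomial q over ℂ with degree q < r there exists a polynomial p with degree p < k + 1 such that a divides p₀·p' − p₀'·p − q; that is, the linear map sending p (of degree < k+1) to the remainder of p₀·p' − p₀'·p modulo a is surjective onto the space of polynomials of degree < r. -/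
open Polynomial

/-- Every polynomial over ℂ has a formal antiderivative. -/
lemma exists_antiderivative (s : Polynomial ℂ) : ∃ g : Polynomial ℂ, derivative g = s := by
  induction s using Polynomial.induction_on' with
  | add p q hp hq =>
    obtain ⟨g, hg⟩ := hp
    obtain ⟨h, hh⟩ := hq
    exact ⟨g + h, by simp [hg, hh]⟩
  | monomial n c =>
    refine ⟨C (c / (n + 1)) * X ^ (n + 1), ?_⟩
    have hn : ((n : ℂ) + 1) ≠ 0 := Nat.cast_add_one_ne_zero n
    rw [derivative_C_mul, derivative_X_pow, Nat.add_sub_cancel, ← mul_assoc, ← C_mul]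
    push_cast
    rw [div_mul_cancel₀ _ hn]
    exact (C_mul_X_pow_eq_monomial)

/-- Surjectivity statement in the proof of Lemma 3.3: if `2r ≤ k+1`, `a` is monic of
degree `r`, `p₀` monic squarefree of degree `k`, and `a`, `p₀` coprime, then for every
polynomial `q` of degree `< r` there is a polynomial `p` of degree `< k+1` with
`a ∣ p₀ * p' - p₀' * p - q`. -/
theorem wronskian_mod_surjective (k r : ℕ) (hkr : 2 * r ≤ k + 1) (a p₀ : Polynomial ℂ)
    (ha : a.Monic) (hadeg : a.natDegree = r)
    (hp₀ : p₀.Monic) (hp₀sq : Squarefree p₀) (hp₀deg : p₀.natDegree = k)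
    (hcop : IsCoprime a p₀) :
    ∀ q : Polynomial ℂ, q.degree < (r : ℕ) →
      ∃ p : Polynomial ℂ, p.degree < ((k + 1 : ℕ) : WithBot ℕ) ∧
        a ∣ p₀ * derivative p - derivative p₀ * p - q := by
  intro q hq
  -- coprimality of a and p₀^2
  obtain ⟨u, v, huv⟩ := hcop.pow_right (n := 2)
  obtain ⟨g, hg⟩ := exists_antiderivative (v * q)
  set p : Polynomial ℂ := p₀ * g with hpdef
  have key : a ∣ p₀ * derivative p - derivative p₀ * p - q := by
    have h1 : p₀ * derivative p - derivative p₀ * p = p₀ ^ 2 * derivative g := by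
      rw [hpdef, derivative_mul]; ring
    have h2 : p₀ * derivative p - derivative p₀ * p - q = -(q * u) * a := by
      rw [h1, hg]
      have : v * p₀ ^ 2 = 1 - u * a := by linear_combination huv
      linear_combination q * this
    rw [h2]
    exact dvd_mul_left a _
  -- reduce p modulo a^2
  set h := p /ₘ a ^ 2 with hh
  set p₂ := p %ₘ a ^ 2 with hp₂
  have hmon : (a ^ 2).Monic := ha.pow 2
  have hp2eq : p₂ = p - a ^ 2 * h := by
    rw [hp₂, hh, eq_sub_iff_add_eq, modByMonic_add_div p (a ^ 2)]
  refine ⟨p₂, ?_, ?_⟩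
  · have hdeg := degree_modByMonic_lt p hmon
    have hda : (a ^ 2).degree = ((2 * r : ℕ) : WithBot ℕ) := by
      rw [degree_eq_natDegree hmon.ne_zero, natDegree_pow, hadeg]
    calc p₂.degree < (a ^ 2).degree := hdeg
      _ = ((2 * r : ℕ) : WithBot ℕ) := hda
      _ ≤ ((k + 1 : ℕ) : WithBot ℕ) := by exact_mod_cast hkr
  · have expand : p₀ * derivative p₂ - derivative p₀ * p₂ - q =
        (p₀ * derivative p - derivative p₀ * p - q)
          - a * (p₀ * (C 2 * derivative a * h + a * derivative h) - derivative p₀ * a * h) := by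
      rw [hp2eq]
      simp only [derivative_sub, derivative_mul, derivative_pow]
      ring
    rw [expand]
    exact dvd_sub key ⟨_, rfl⟩
end

section
/- Let U be an open subset of ℝ^N and let g, h : ℝ^N → Polynomial ℂ be families of polynomials depending smoothly on the parameter on U, i.e. for every natural number i the coefficient functions t ↦ (g t).coeff i and t ↦ (h t).coeff i are C^∞ on U. Suppose there are natural numbers m, n, L such that for all t ∈ U: g t ≠ 0 with natDegree (g t) = m, h t ≠ 0 with natDegree (h t) = n, and the monic greatest common divisor l t = normalize (gcd (g t) (h t)) has natDegree (l t) = L. Then l depends smoothly on the parameter: for every natural number i the function t ↦ (l t).coeff i is C^∞ on U. -/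
open Polynomial

noncomputable section

namespace GcdSmoothAux

/-- Index type for rows/columns of the Sylvester-type matrix. -/
abbrev GIdx (q p : ℕ) := Fin (q + 1) ⊕ Fin p

def gidx {q p : ℕ} (c : GIdx q p) : ℕ := Sum.elim Fin.val Fin.val c

def gpol {q p : ℕ} (g h : Polynomial ℂ) (c : GIdx q p) : Polynomial ℂ :=
  Sum.elim (fun _ => g) (fun _ => h) c

def rowIdx {q p : ℕ} (c : GIdx q p) : ℕ :=
  Sum.elim Fin.val (fun k => q + 1 + k.val) c

def colFun {q p : ℕ} (g h : Polynomial ℂ) (c : GIdx q p) (j : ℕ) : ℂ :=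
  if gidx c ≤ j then (gpol g h c).coeff (j - gidx c) else 0

def gcdMat (g h : Polynomial ℂ) (L q p : ℕ) : Matrix (GIdx q p) (GIdx q p) ℂ :=
  Matrix.of fun r c => colFun g h c (L + rowIdx r)

def wPoly {q p : ℕ} (g h : Polynomial ℂ) (x : GIdx q p → ℂ) : Polynomial ℂ :=
  ∑ c, C (x c) * (gpol g h c * X ^ gidx c)

lemma coeff_wPoly {q p : ℕ} (g h : Polynomial ℂ) (x : GIdx q p → ℂ) (j : ℕ) :
    (wPoly g h x).coeff j = ∑ c, x c * colFun g h c j := by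
  simp only [wPoly, finset_sum_coeff, coeff_C_mul, coeff_mul_X_pow', colFun]

lemma mulVec_gcdMat {q p : ℕ} (g h : Polynomial ℂ) (L : ℕ) (x : GIdx q p → ℂ) (r : GIdx q p) :
    (gcdMat g h L q p).mulVec x r = (wPoly g h x).coeff (L + rowIdx r) := by
  rw [coeff_wPoly]
  simp only [Matrix.mulVec, dotProduct, gcdMat, Matrix.of_apply]
  exact Finset.sum_congr rfl fun c _ => mul_comm _ _

lemma natDegree_wPoly_le {q p L : ℕ} {g h : Polynomial ℂ}
    (hgd : g.natDegree = L + p) (hhd : h.natDegree = L + q) (x : GIdx q p → ℂ) :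
    (wPoly g h x).natDegree ≤ L + p + q := by
  apply natDegree_sum_le_of_forall_le
  intro c _
  refine (natDegree_C_mul_le _ _).trans (natDegree_mul_le.trans ?_)
  rcases c with k | k
  · simp only [gpol, gidx, Sum.elim_inl, natDegree_X_pow, hgd]
    have := k.isLt
    omega
  · simp only [gpol, gidx, Sum.elim_inr, natDegree_X_pow, hhd]
    have := k.isLt
    omega

lemma gcd_dvd_wPoly {q p : ℕ} (g h : Polynomial ℂ) (x : GIdx q p → ℂ) :
    GCDMonoid.gcd g h ∣ wPoly g h x := by
  apply Finset.dvd_sum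
  intro c _
  rcases c with k | k
  · simp only [gpol, Sum.elim_inl]
    exact ((gcd_dvd_left g h).mul_right _).mul_left _
  · simp only [gpol, Sum.elim_inr]
    exact ((gcd_dvd_right g h).mul_right _).mul_left _

lemma coeff_sum_C_X (M : ℕ) (y : Fin M → ℂ) (k : Fin M) :
    (∑ j : Fin M, C (y j) * X ^ (j : ℕ)).coeff (k : ℕ) = y k := by
  rw [finset_sum_coeff, Finset.sum_eq_single k]
  · simp [coeff_C_mul, coeff_X_pow]
  · intro j _ hjk
    have hne : (j : ℕ) ≠ (k : ℕ) := fun hcon => hjk (Fin.ext hcon)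
    simp [coeff_C_mul, coeff_X_pow, hne, Ne.symm hne]
  · intro hk
    exact absurd (Finset.mem_univ k) hk

lemma det_gcdMat_ne_zero {q p L : ℕ} {g h : Polynomial ℂ}
    (hg0 : g ≠ 0) (hgd : g.natDegree = L + p)
    (hh0 : h ≠ 0) (hhd : h.natDegree = L + q)
    (hL : (GCDMonoid.gcd g h).natDegree = L) :
    (gcdMat g h L q p).det ≠ 0 := by
  intro hdet
  obtain ⟨x, hx0, hxA⟩ := Matrix.exists_mulVec_eq_zero_iff.mpr hdet
  have hcoeff : ∀ j, L ≤ j → j ≤ L + p + q → (wPoly g h x).coeff j = 0 := by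
    intro j h1 h2
    obtain ⟨r, hr⟩ : ∃ r : GIdx q p, L + rowIdx r = j := by
      rcases le_or_gt (j - L) q with hq' | hq'
      · exact ⟨Sum.inl ⟨j - L, by omega⟩, by simp only [rowIdx, Sum.elim_inl]; omega⟩
      · exact ⟨Sum.inr ⟨j - L - (q + 1), by omega⟩, by simp only [rowIdx, Sum.elim_inr]; omega⟩
    rw [← hr, ← mulVec_gcdMat, hxA, Pi.zero_apply]
  have hw0 : wPoly g h x = 0 := by
    by_contra hne
    have hdvd : GCDMonoid.gcd g h ∣ wPoly g h x := gcd_dvd_wPoly g h x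
    have h1 : L ≤ (wPoly g h x).natDegree := hL ▸ natDegree_le_of_dvd hdvd hne
    have h2 : (wPoly g h x).natDegree ≤ L + p + q := natDegree_wPoly_le hgd hhd x
    have h3 := hcoeff _ h1 h2
    rw [coeff_natDegree] at h3
    exact leadingCoeff_ne_zero.mpr hne h3
  set a : Polynomial ℂ := ∑ k : Fin (q + 1), C (x (Sum.inl k)) * X ^ (k : ℕ) with ha
  set b : Polynomial ℂ := ∑ k : Fin p, C (x (Sum.inr k)) * X ^ (k : ℕ) with hb
  have hsplit : wPoly g h x = g * a + h * b := by
    rw [wPoly, Fintype.sum_sum_type, ha, hb, Finset.mul_sum, Finset.mul_sum]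
    congr 1
    · exact Finset.sum_congr rfl fun k _ => by
        simp only [gpol, gidx, Sum.elim_inl]; ring
    · exact Finset.sum_congr rfl fun k _ => by
        simp only [gpol, gidx, Sum.elim_inr]; ring
  have hab : g * a + h * b = 0 := by rw [← hsplit, hw0]
  have hd0 : GCDMonoid.gcd g h ≠ 0 := fun h0 => hg0 ((gcd_eq_zero_iff _ _).mp h0).1
  set d := GCDMonoid.gcd g h with hd
  have hgd' : d * (g / d) = g := EuclideanDomain.mul_div_cancel' hd0 (gcd_dvd_left g h)
  have hhd' : d * (h / d) = h := EuclideanDomain.mul_div_cancel' hd0 (gcd_dvd_right g h)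
  have hcop : IsCoprime (g / d) (h / d) := isCoprime_div_gcd_div_gcd hh0
  have hg10 : g / d ≠ 0 := fun h0 => hg0 (by rw [← hgd', h0, mul_zero])
  have hh10 : h / d ≠ 0 := fun h0 => hh0 (by rw [← hhd', h0, mul_zero])
  have hdegg1 : (g / d).natDegree = p := by
    have hmul := natDegree_mul hd0 hg10
    rw [hgd', hgd, hL] at hmul
    omega
  have hdegh1 : (h / d).natDegree = q := by
    have hmul := natDegree_mul hd0 hh10
    rw [hhd', hhd, hL] at hmul
    omega
  have hkey : a = 0 := by
    by_contra ha0
    have hprod : (g / d) * a = (h / d) * (-b) := by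
      have hstep : d * ((g / d) * a) = d * ((h / d) * (-b)) := by
        rw [← mul_assoc, ← mul_assoc, hgd', hhd']
        linear_combination hab
      exact mul_left_cancel₀ hd0 hstep
    have hdvda : (h / d) ∣ a :=
      hcop.symm.dvd_of_dvd_mul_left ⟨-b, by linear_combination hprod⟩
    obtain ⟨c, hc⟩ := hdvda
    have hc0 : c ≠ 0 := fun h0 => ha0 (by rw [hc, h0, mul_zero])
    have hbc : b = -((g / d) * c) := by
      have hstep : (h / d) * ((g / d) * c) = (h / d) * (-b) := by
        rw [← hprod, hc]; ring
      have := mul_left_cancel₀ hh10 hstep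
      linear_combination this
    have hb0 : b ≠ 0 := by
      rw [hbc, neg_ne_zero]
      exact mul_ne_zero hg10 hc0
    have hple : p ≤ b.natDegree := by
      rw [hbc, natDegree_neg, natDegree_mul hg10 hc0, hdegg1]
      exact Nat.le_add_right _ _
    have hplt : b.natDegree < p := by
      have hp0 : p ≠ 0 := by
        rintro rfl
        exact hb0 (by rw [hb]; simp)
      have hle : b.natDegree ≤ p - 1 := by
        rw [hb]
        apply natDegree_sum_le_of_forall_le
        intro k _
        refine (natDegree_C_mul_le _ _).trans ?_
        rw [natDegree_X_pow]
        have := k.isLt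
        omega
      omega
    exact absurd hple (Nat.not_le.mpr hplt)
  have hbz : b = 0 := by
    have hzb : h * b = 0 := by
      have := hab
      rw [hkey, mul_zero, zero_add] at this
      exact this
    rcases mul_eq_zero.mp hzb with h1 | h1
    · exact absurd h1 hh0
    · exact h1
  apply hx0
  funext c
  rcases c with k | k
  · have hck := coeff_sum_C_X (q + 1) (fun j => x (Sum.inl j)) k
    rw [← ha, hkey] at hck
    simpa using hck.symm
  · have hck := coeff_sum_C_X p (fun j => x (Sum.inr j)) k
    rw [← hb, hbz] at hck
    simpa using hck.symm

lemma coeff_gcd_eq {q p L : ℕ} {g h : Polynomial ℂ}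
    (hg0 : g ≠ 0) (hgd : g.natDegree = L + p)
    (hh0 : h ≠ 0) (hhd : h.natDegree = L + q)
    (hL : (GCDMonoid.gcd g h).natDegree = L) (i : ℕ) :
    (GCDMonoid.gcd g h).coeff i =
      ∑ c : GIdx q p, ((gcdMat g h L q p).det⁻¹ *
        Matrix.cramer (gcdMat g h L q p) (Pi.single (Sum.inl 0) 1) c) * colFun g h c i := by
  have hdet := det_gcdMat_ne_zero hg0 hgd hh0 hhd hL
  set x : GIdx q p → ℂ :=
    (gcdMat g h L q p).det⁻¹ •
      Matrix.cramer (gcdMat g h L q p) (Pi.single (Sum.inl 0) 1) with hx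
  have hAx : (gcdMat g h L q p).mulVec x = Pi.single (Sum.inl 0) 1 := by
    rw [hx, Matrix.mulVec_smul, Matrix.mulVec_cramer, smul_smul, inv_mul_cancel₀ hdet, one_smul]
  have hco : ∀ r, (wPoly g h x).coeff (L + rowIdx r) =
      (Pi.single (Sum.inl 0) 1 : GIdx q p → ℂ) r := by
    intro r
    rw [← mulVec_gcdMat, hAx]
  have hwL : (wPoly g h x).coeff L = 1 := by
    have h0 := hco (Sum.inl 0)
    simpa [rowIdx] using h0
  have hwne : wPoly g h x ≠ 0 := fun h0 => by simp [h0] at hwL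
  have hdvd : GCDMonoid.gcd g h ∣ wPoly g h x := gcd_dvd_wPoly g h x
  have hge : L ≤ (wPoly g h x).natDegree := hL ▸ natDegree_le_of_dvd hdvd hwne
  have hle : (wPoly g h x).natDegree ≤ L + p + q := natDegree_wPoly_le hgd hhd x
  have hdeg : (wPoly g h x).natDegree = L := by
    by_contra hne
    obtain ⟨r, hr⟩ : ∃ r : GIdx q p, L + rowIdx r = (wPoly g h x).natDegree := by
      rcases le_or_gt ((wPoly g h x).natDegree - L) q with hq' | hq'
      · exact ⟨Sum.inl ⟨(wPoly g h x).natDegree - L, by omega⟩,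
          by simp only [rowIdx, Sum.elim_inl]; omega⟩
      · exact ⟨Sum.inr ⟨(wPoly g h x).natDegree - L - (q + 1), by omega⟩,
          by simp only [rowIdx, Sum.elim_inr]; omega⟩
    have hr0 : r ≠ Sum.inl 0 := by
      rintro rfl
      simp only [rowIdx, Sum.elim_inl, Fin.val_zero, Nat.add_zero] at hr
      exact hne hr.symm
    have hz : (wPoly g h x).coeff (wPoly g h x).natDegree = 0 := by
      rw [← hr, hco r]
      exact Pi.single_eq_of_ne hr0 1
    rw [coeff_natDegree] at hz
    exact leadingCoeff_ne_zero.mpr hwne hz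
  obtain ⟨c', hc'⟩ := hdvd
  have hc'0 : c' ≠ 0 := fun h0 => hwne (by rw [hc', h0, mul_zero])
  have hd0 : GCDMonoid.gcd g h ≠ 0 := fun h0 => hg0 ((gcd_eq_zero_iff _ _).mp h0).1
  have hdegc' : c'.natDegree = 0 := by
    have hmul := natDegree_mul hd0 hc'0
    rw [← hc', hdeg, hL] at hmul
    omega
  have hγ : c' = C (c'.coeff 0) := eq_C_of_natDegree_eq_zero hdegc'
  have hmon : (GCDMonoid.gcd g h).Monic := by
    have := Polynomial.monic_normalize (p := GCDMonoid.gcd g h) hd0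
    rwa [normalize_gcd] at this
  have hco1 : (GCDMonoid.gcd g h).coeff L = 1 := by
    rw [← hL, coeff_natDegree]
    exact hmon
  have hγ1 : c'.coeff 0 = 1 := by
    have hcomp : (wPoly g h x).coeff L = (GCDMonoid.gcd g h).coeff L * c'.coeff 0 := by
      conv_lhs => rw [hc', hγ, coeff_mul_C]
    rw [hwL, hco1, one_mul] at hcomp
    exact hcomp.symm
  have hwd : wPoly g h x = GCDMonoid.gcd g h := by
    rw [hc', hγ, hγ1, map_one, mul_one]
  rw [← hwd, coeff_wPoly]
  refine Finset.sum_congr rfl fun c _ => ?_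
  rw [hx]
  simp [smul_eq_mul]

lemma contDiffOn_det {ι : Type*} [Fintype ι] [DecidableEq ι]
    {N : ℕ} {U : Set (EuclideanSpace ℝ (Fin N))} (B : EuclideanSpace ℝ (Fin N) → Matrix ι ι ℂ)
    (hB : ∀ r c, ContDiffOn ℝ (⊤ : ℕ∞) (fun t => B t r c) U) :
    ContDiffOn ℝ (⊤ : ℕ∞) (fun t => (B t).det) U := by
  simp only [Matrix.det_apply']
  apply ContDiffOn.sum
  intro σ _
  exact contDiffOn_const.mul (contDiffOn_prod fun r _ => hB _ _)

lemma contDiffOn_colFun {q p : ℕ} {N : ℕ} {U : Set (EuclideanSpace ℝ (Fin N))}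
    (g h : EuclideanSpace ℝ (Fin N) → Polynomial ℂ)
    (hg : ∀ i : ℕ, ContDiffOn ℝ (⊤ : ℕ∞) (fun t => (g t).coeff i) U)
    (hh : ∀ i : ℕ, ContDiffOn ℝ (⊤ : ℕ∞) (fun t => (h t).coeff i) U)
    (c : GIdx q p) (j : ℕ) :
    ContDiffOn ℝ (⊤ : ℕ∞) (fun t => colFun (g t) (h t) c j) U := by
  rcases c with k | k
  · rcases le_or_gt (k : ℕ) j with hc | hc
    · simp only [colFun, gidx, gpol, Sum.elim_inl, if_pos hc, hc, ↓reduceIte]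
      exact hg _
    · simp only [colFun, gidx, gpol, Sum.elim_inl, if_neg (Nat.not_le.mpr hc), Nat.not_le.mpr hc, ↓reduceIte]
      exact contDiffOn_const
  · rcases le_or_gt (k : ℕ) j with hc | hc
    · simp only [colFun, gidx, gpol, Sum.elim_inr, if_pos hc, hc, ↓reduceIte]
      exact hh _
    · simp only [colFun, gidx, gpol, Sum.elim_inr, if_neg (Nat.not_le.mpr hc), Nat.not_le.mpr hc, ↓reduceIte]
      exact contDiffOn_const

end GcdSmoothAux

end

open GcdSmoothAux in
/-- Lemma 4.2 (smooth case): if `g_t`, `h_t` are families of polynomials whose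
coefficients depend smoothly on `t ∈ U ⊆ ℝ^N`, and the degrees of `g_t`, `h_t` and of
their monic gcd `l_t = normalize (gcd g_t h_t)` are constant on `U`, then the
coefficients of `l_t` depend smoothly on `t`. -/
theorem gcd_smooth_dependence (N : ℕ) (U : Set (EuclideanSpace ℝ (Fin N))) (hU : IsOpen U)
    (g h : EuclideanSpace ℝ (Fin N) → Polynomial ℂ)
    (hg : ∀ i : ℕ, ContDiffOn ℝ (⊤ : ℕ∞) (fun t => (g t).coeff i) U)
    (hh : ∀ i : ℕ, ContDiffOn ℝ (⊤ : ℕ∞) (fun t => (h t).coeff i) U)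
    (m n L : ℕ)
    (hgdeg : ∀ t ∈ U, g t ≠ 0 ∧ (g t).natDegree = m)
    (hhdeg : ∀ t ∈ U, h t ≠ 0 ∧ (h t).natDegree = n)
    (hLdeg : ∀ t ∈ U, (normalize (EuclideanDomain.gcd (g t) (h t))).natDegree = L) :
    ∀ i : ℕ, ContDiffOn ℝ (⊤ : ℕ∞)
      (fun t => (normalize (EuclideanDomain.gcd (g t) (h t))).coeff i) U := by
  intro i
  rcases U.eq_empty_or_nonempty with rfl | ⟨t0, ht0⟩
  · intro t ht
    exact absurd ht (Set.notMem_empty t)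
  have key : ∀ t, normalize (EuclideanDomain.gcd (g t) (h t)) = GCDMonoid.gcd (g t) (h t) := by
    intro t
    exact (normalize_eq_normalize
      (dvd_gcd (EuclideanDomain.gcd_dvd_left _ _) (EuclideanDomain.gcd_dvd_right _ _))
      (EuclideanDomain.dvd_gcd (gcd_dvd_left _ _) (gcd_dvd_right _ _))).trans
      (normalize_gcd _ _)
  have hLm : L ≤ m := by
    have h1 := hgdeg t0 ht0
    have h2 := natDegree_le_of_dvd
      (normalize_dvd_iff.mpr (EuclideanDomain.gcd_dvd_left (g t0) (h t0))) h1.1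
    rw [hLdeg t0 ht0, h1.2] at h2
    exact h2
  have hLn : L ≤ n := by
    have h1 := hhdeg t0 ht0
    have h2 := natDegree_le_of_dvd
      (normalize_dvd_iff.mpr (EuclideanDomain.gcd_dvd_right (g t0) (h t0))) h1.1
    rw [hLdeg t0 ht0, h1.2] at h2
    exact h2
  obtain ⟨p, rfl⟩ : ∃ p, m = L + p := ⟨m - L, by omega⟩
  obtain ⟨q, rfl⟩ : ∃ q, n = L + q := ⟨n - L, by omega⟩
  have hyp : ∀ t ∈ U, g t ≠ 0 ∧ (g t).natDegree = L + p ∧ h t ≠ 0 ∧ (h t).natDegree = L + q ∧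
      (GCDMonoid.gcd (g t) (h t)).natDegree = L := by
    intro t ht
    refine ⟨(hgdeg t ht).1, (hgdeg t ht).2, (hhdeg t ht).1, (hhdeg t ht).2, ?_⟩
    rw [← key t]
    exact hLdeg t ht
  have hA : ∀ (r c : GIdx q p), ContDiffOn ℝ (⊤ : ℕ∞)
      (fun t => gcdMat (g t) (h t) L q p r c) U :=
    fun r c => contDiffOn_colFun g h hg hh c (L + rowIdx r)
  have hdet : ContDiffOn ℝ (⊤ : ℕ∞) (fun t => (gcdMat (g t) (h t) L q p).det) U :=
    contDiffOn_det _ hA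
  refine ContDiffOn.congr (f := fun t => ∑ c : GIdx q p,
      ((gcdMat (g t) (h t) L q p).det⁻¹ *
        Matrix.cramer (gcdMat (g t) (h t) L q p) (Pi.single (Sum.inl 0) 1) c) *
        colFun (g t) (h t) c i) ?_ ?_
  · apply ContDiffOn.sum
    intro c _
    refine ContDiffOn.mul (ContDiffOn.mul ?_ ?_) (contDiffOn_colFun g h hg hh c i)
    · refine hdet.inv fun t ht => ?_
      obtain ⟨h1, h2, h3, h4, h5⟩ := hyp t ht
      exact det_gcdMat_ne_zero h1 h2 h3 h4 h5
    · have hrw : (fun t => Matrix.cramer (gcdMat (g t) (h t) L q p) (Pi.single (Sum.inl 0) 1) c)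
          = fun t => ((gcdMat (g t) (h t) L q p).updateCol c (Pi.single (Sum.inl 0) 1)).det := by
        funext t
        rw [Matrix.cramer_apply]
      rw [hrw]
      apply contDiffOn_det
      intro r c'
      by_cases hcc : c' = c
      · simp only [Matrix.updateCol_apply, if_pos hcc]
        exact contDiffOn_const
      · simp only [Matrix.updateCol_apply, if_neg hcc]
        exact hA r c'
  · intro t ht
    obtain ⟨h1, h2, h3, h4, h5⟩ := hyp t ht
    rw [key t]
    exact coeff_gcd_eq h1 h2 h3 h4 h5 i
end

section
/- Let U be an open subset of ℂ^N and let g, h : ℂ^N → Polynomial ℂ be families of polynomials depending holomorphically on the parameter on U, i.e. for every natural number i the coefficient functions t ↦ (g t).coeff i and t ↦ (h t).coeff i are complex differentiable on U. Suppose there are natural numbers m, n, L such that for all t ∈ U: g t ≠ 0 with natDegree (g t) = m, h t ≠ 0 with natDegree (h t) = n, and the monic greatest common divisor l t = normalize (gcd (g t) (h t)) has natDegree (l t) = L. Then l depends holomorphically on the parameter: for every natural number i the function t ↦ (l t).coeff i is complex differentiable on U. -/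
open Polynomial

noncomputable section GcdHolomorphicAux

/-- The polynomial with coefficient vector `x` (degree `< r`). -/
noncomputable def sumX {r : ℕ} (x : Fin r → ℂ) : Polynomial ℂ :=
  ∑ k : Fin r, C (x k) * X ^ (k : ℕ)

lemma sumX_coeff {r : ℕ} (x : Fin r → ℂ) (j : ℕ) :
    (sumX x).coeff j = if h : j < r then x ⟨j, h⟩ else 0 := by
  rw [sumX, finset_sum_coeff]
  split_ifs with h
  · rw [Finset.sum_eq_single (⟨j, h⟩ : Fin r)]
    · simp [coeff_X_pow]
    · intro k _ hk
      rw [coeff_C_mul, coeff_X_pow, if_neg, mul_zero]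
      intro hjk
      exact hk (Fin.val_injective (show (k : ℕ) = j from hjk.symm))
    · intro hmem; exact absurd (Finset.mem_univ _) hmem
  · apply Finset.sum_eq_zero
    intro k _
    rw [coeff_C_mul, coeff_X_pow, if_neg, mul_zero]
    intro hjk
    exact h (hjk ▸ k.isLt)

lemma sumX_mul_coeff {r : ℕ} (x : Fin r → ℂ) (p : Polynomial ℂ) (d : ℕ) :
    (sumX x * p).coeff d = ∑ k : Fin r, x k * (p * X ^ (k : ℕ)).coeff d := by
  rw [sumX, Finset.sum_mul, finset_sum_coeff]
  refine Finset.sum_congr rfl fun k _ => ?_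
  rw [mul_assoc, coeff_C_mul, (commute_X_pow p (k : ℕ)).eq]

lemma sumX_mul_coeff_eq_zero {r : ℕ} (x : Fin r → ℂ) (p : Polynomial ℂ) (d : ℕ)
    (hd : r + p.natDegree ≤ d) :
    (sumX x * p).coeff d = 0 := by
  rw [sumX_mul_coeff]
  apply Finset.sum_eq_zero
  intro k _
  have hk := k.isLt
  rw [coeff_mul_X_pow', if_pos (by omega), coeff_eq_zero_of_natDegree_lt (by omega), mul_zero]

/-- The Sylvester-like matrix of the system determining the monic gcd. -/
noncomputable def gcdMat (L n' m' : ℕ) (p q : Polynomial ℂ) :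
    Matrix (Fin n' ⊕ Fin m') (Fin n' ⊕ Fin m') ℂ := fun j k =>
  Sum.elim (fun k₁ : Fin n' => (p * X ^ (k₁ : ℕ)).coeff (L + (finSumFinEquiv j : ℕ)))
    (fun k₂ : Fin m' => (q * X ^ (k₂ : ℕ)).coeff (L + (finSumFinEquiv j : ℕ))) k

/-- Right hand side of the linear system. -/
noncomputable def gcdE (n' m' : ℕ) : Fin n' ⊕ Fin m' → ℂ := fun j =>
  if (finSumFinEquiv j : ℕ) = 0 then 1 else 0

/-- The solution vector (via Cramer's rule). -/
noncomputable def gcdVec (L n' m' : ℕ) (p q : Polynomial ℂ) : Fin n' ⊕ Fin m' → ℂ :=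
  ((gcdMat L n' m' p q).det)⁻¹ • Matrix.cramer (gcdMat L n' m' p q) (gcdE n' m')

lemma gcdMat_mulVec (L n' m' : ℕ) (p q : Polynomial ℂ) (x : Fin n' ⊕ Fin m' → ℂ)
    (j : Fin n' ⊕ Fin m') :
    (gcdMat L n' m' p q).mulVec x j
      = (sumX (x ∘ Sum.inl) * p + sumX (x ∘ Sum.inr) * q).coeff
          (L + (finSumFinEquiv j : ℕ)) := by
  rw [coeff_add, sumX_mul_coeff, sumX_mul_coeff, Matrix.mulVec, dotProduct,
    Fintype.sum_sum_type]
  simp only [gcdMat, Sum.elim_inl, Sum.elim_inr, Function.comp_apply]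
  congr 1 <;>
    first
      | rfl
      | exact Finset.sum_congr rfl fun k _ => mul_comm _ _

/-- Key pointwise lemma: the determinant is nonzero and the monic gcd is the
combination given by Cramer's rule. -/
lemma gcd_eq_comb (p q : Polynomial ℂ) (hp : p ≠ 0) (hq : q ≠ 0) (L n' m' : ℕ)
    (hK : 0 < n' + m')
    (hpd : p.natDegree = L + m') (hqd : q.natDegree = L + n')
    (hL : (normalize (EuclideanDomain.gcd p q)).natDegree = L) :
    (gcdMat L n' m' p q).det ≠ 0 ∧
      normalize (EuclideanDomain.gcd p q) =
        sumX ((gcdVec L n' m' p q) ∘ Sum.inl) * p +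
          sumX ((gcdVec L n' m' p q) ∘ Sum.inr) * q := by
  classical
  set d := EuclideanDomain.gcd p q with hd_def
  have hd0 : d ≠ 0 := fun h => hp (EuclideanDomain.gcd_eq_zero_iff.mp h).1
  set l := normalize d with hl_def
  have hl0 : l ≠ 0 := by rw [hl_def, Ne, normalize_eq_zero]; exact hd0
  have hldvd_p : l ∣ p := normalize_dvd_iff.mpr (EuclideanDomain.gcd_dvd_left p q)
  have hldvd_q : l ∣ q := normalize_dvd_iff.mpr (EuclideanDomain.gcd_dvd_right p q)
  have hlmonic : l.Monic := monic_normalize hd0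
  have hdL : d.natDegree = L := by
    have : l.degree = d.degree := degree_normalize
    rw [← hL, hl_def]
    exact (natDegree_eq_natDegree this.symm)
  obtain ⟨p₁, hp₁⟩ : d ∣ p := EuclideanDomain.gcd_dvd_left p q
  obtain ⟨q₁, hq₁⟩ : d ∣ q := EuclideanDomain.gcd_dvd_right p q
  have hp₁0 : p₁ ≠ 0 := fun h => hp (by rw [hp₁, h, mul_zero])
  have hq₁0 : q₁ ≠ 0 := fun h => hq (by rw [hq₁, h, mul_zero])
  have hp₁d : p₁.natDegree = m' := by
    have := natDegree_mul hd0 hp₁0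
    rw [← hp₁, hpd, hdL] at this
    omega
  have hq₁d : q₁.natDegree = n' := by
    have := natDegree_mul hd0 hq₁0
    rw [← hq₁, hqd, hdL] at this
    omega
  have hcop : IsCoprime p₁ q₁ := by
    set A := EuclideanDomain.gcdA p q with hA_def
    set B := EuclideanDomain.gcdB p q with hB_def
    have hbez : d = p * A + q * B := EuclideanDomain.gcd_eq_gcd_ab p q
    have h2 : d * 1 = d * (A * p₁ + B * q₁) :=
      calc d * 1 = d := mul_one d
        _ = p * A + q * B := hbez
        _ = d * p₁ * A + (d * q₁) * B := by rw [← hp₁, ← hq₁]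
        _ = d * (A * p₁ + B * q₁) := by ring
    exact ⟨A, B, (mul_left_cancel₀ hd0 h2).symm⟩
  -- injectivity of the matrix
  have hinj : ∀ x : Fin n' ⊕ Fin m' → ℂ, (gcdMat L n' m' p q).mulVec x = 0 → x = 0 := by
    intro x hx
    set a := sumX (x ∘ Sum.inl) with ha_def
    set b := sumX (x ∘ Sum.inr) with hb_def
    set P := a * p + b * q with hP_def
    have hcoeff : ∀ dd : ℕ, L ≤ dd → P.coeff dd = 0 := by
      intro dd hdd
      by_cases hlt : dd < L + (n' + m')
      · have hj : dd - L < n' + m' := by omega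
        have hxj := congrFun hx (finSumFinEquiv.symm ⟨dd - L, hj⟩)
        rw [gcdMat_mulVec] at hxj
        simp only [Equiv.apply_symm_apply] at hxj
        have hdd' : L + (dd - L) = dd := by omega
        rw [hdd'] at hxj
        exact hxj
      · rw [hP_def, coeff_add, sumX_mul_coeff_eq_zero _ _ _ (by omega),
          sumX_mul_coeff_eq_zero _ _ _ (by omega), add_zero]
    have hPdeg : P.degree < (L : ℕ) := (degree_lt_iff_coeff_zero P L).mpr hcoeff
    have hlP : l ∣ P := dvd_add (hldvd_p.mul_left a) (hldvd_q.mul_left b)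
    have hP0 : P = 0 := by
      refine eq_zero_of_dvd_of_degree_lt hlP ?_
      rwa [degree_eq_natDegree hl0, hL]
    have hab : a * p₁ = -(b * q₁) := by
      have h1 : a * p + b * q = 0 := hP0
      rw [hp₁, hq₁] at h1
      have h2 : d * (a * p₁ + b * q₁) = d * 0 := by rw [mul_zero]; linear_combination h1
      have := mul_left_cancel₀ hd0 h2
      linear_combination this
    have hdvd : q₁ ∣ a := by
      refine (hcop.symm).dvd_of_dvd_mul_right ⟨-b, ?_⟩
      rw [hab]; ring
    have ha0 : a = 0 := by
      by_contra h
      have h1 : q₁.natDegree ≤ a.natDegree := natDegree_le_of_dvd hdvd h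
      have h2 : a.natDegree < n' := by
        by_contra h2
        have := sumX_coeff (x ∘ Sum.inl) a.natDegree
        rw [dif_neg (by omega)] at this
        exact h (leadingCoeff_eq_zero.mp this)
      omega
    have hb0 : b = 0 := by
      have : b * q = 0 := by
        have := hP0
        rw [hP_def, ha0, zero_mul, zero_add] at this
        exact this
      rcases mul_eq_zero.mp this with h | h
      · exact h
      · exact absurd h hq
    funext k
    rcases k with k₁ | k₂
    · have := sumX_coeff (x ∘ Sum.inl) (k₁ : ℕ)
      rw [dif_pos k₁.isLt, ← ha_def, ha0, coeff_zero] at this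
      simpa using this.symm
    · have := sumX_coeff (x ∘ Sum.inr) (k₂ : ℕ)
      rw [dif_pos k₂.isLt, ← hb_def, hb0, coeff_zero] at this
      simpa using this.symm
  have hdet : (gcdMat L n' m' p q).det ≠ 0 := by
    intro h0
    obtain ⟨v, hv0, hv⟩ := (Matrix.exists_mulVec_eq_zero_iff).mpr h0
    exact hv0 (hinj v hv)
  refine ⟨hdet, ?_⟩
  -- the solution vector solves the system
  set v := gcdVec L n' m' p q with hv_def
  have hMv : (gcdMat L n' m' p q).mulVec v = gcdE n' m' := by
    rw [hv_def, gcdVec, Matrix.mulVec_smul, Matrix.mulVec_cramer, smul_smul,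
      inv_mul_cancel₀ hdet, one_smul]
  set P := sumX (v ∘ Sum.inl) * p + sumX (v ∘ Sum.inr) * q with hP_def
  have hPcoeff : ∀ j : Fin n' ⊕ Fin m',
      P.coeff (L + (finSumFinEquiv j : ℕ)) = gcdE n' m' j := by
    intro j
    have := congrFun hMv j
    rw [gcdMat_mulVec] at this
    exact this
  have hPL : P.coeff L = 1 := by
    have := hPcoeff (finSumFinEquiv.symm ⟨0, hK⟩)
    simpa [gcdE] using this
  have hhigh : ∀ dd : ℕ, L < dd → P.coeff dd = 0 := by
    intro dd hdd
    by_cases hlt : dd < L + (n' + m')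
    · have hj : dd - L < n' + m' := by omega
      have := hPcoeff (finSumFinEquiv.symm ⟨dd - L, hj⟩)
      simp only [Equiv.apply_symm_apply] at this
      have hdd' : L + (dd - L) = dd := by omega
      rw [hdd'] at this
      rw [this, gcdE, Equiv.apply_symm_apply]
      simp only []
      rw [if_neg]
      omega
    · rw [hP_def, coeff_add, sumX_mul_coeff_eq_zero _ _ _ (by omega),
        sumX_mul_coeff_eq_zero _ _ _ (by omega), add_zero]
  have hPne : P ≠ 0 := fun h => by simp [h] at hPL
  have hPdeg : P.natDegree = L := by
    refine le_antisymm (natDegree_le_iff_coeff_eq_zero.mpr hhigh) ?_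
    exact le_natDegree_of_ne_zero (hPL ▸ one_ne_zero)
  have hPmonic : P.leadingCoeff = 1 := by
    rw [leadingCoeff, hPdeg, hPL]
  -- l divides P, same degree, both monic ⇒ equal
  have hlP : l ∣ P := dvd_add (hldvd_p.mul_left _) (hldvd_q.mul_left _)
  obtain ⟨u, hu⟩ := hlP
  have hu0 : u ≠ 0 := fun h => hPne (by rw [hu, h, mul_zero])
  have hudeg : u.natDegree = 0 := by
    have := natDegree_mul hl0 hu0
    rw [← hu, hPdeg, hL] at this
    omega
  have hulc : u.leadingCoeff = 1 := by
    have := leadingCoeff_mul l u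
    rw [← hu, hPmonic, hlmonic.leadingCoeff, one_mul] at this
    exact this.symm
  have hu1 : u = 1 := by
    rw [eq_C_of_natDegree_eq_zero hudeg]
    rw [leadingCoeff, hudeg] at hulc
    rw [hulc, map_one]
  rw [hu, hu1, mul_one]

end GcdHolomorphicAux

section GcdHolomorphicDiff

/-- Finite products of holomorphic functions are holomorphic. -/
lemma differentiableOn_finset_prod' {ι : Type*}
    {E : Type*} [NormedAddCommGroup E] [NormedSpace ℂ E] {U : Set E}
    (u : Finset ι) (f : ι → E → ℂ) (hf : ∀ i ∈ u, DifferentiableOn ℂ (f i) U) :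
    DifferentiableOn ℂ (fun t => ∏ i ∈ u, f i t) U := by
  classical
  induction u using Finset.induction_on with
  | empty => simpa using differentiableOn_const (1 : ℂ)
  | insert _ _ hnotmem ih =>
    rename_i a u'
    simp only [Finset.prod_insert hnotmem]
    exact (hf _ (Finset.mem_insert_self _ _)).mul
      (ih fun i hi => hf i (Finset.mem_insert_of_mem hi))

/-- Determinants of matrices with holomorphic entries are holomorphic. -/
lemma differentiableOn_det {ι : Type*} [Fintype ι] [DecidableEq ι]
    {E : Type*} [NormedAddCommGroup E] [NormedSpace ℂ E] {U : Set E}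
    (M : E → Matrix ι ι ℂ) (hM : ∀ j k, DifferentiableOn ℂ (fun t => M t j k) U) :
    DifferentiableOn ℂ (fun t => (M t).det) U := by
  simp only [Matrix.det_apply']
  apply DifferentiableOn.fun_sum
  intro σ _
  exact (differentiableOn_const _).mul
    (differentiableOn_finset_prod' Finset.univ (fun i t => M t (σ i) i)
      fun i _ => hM (σ i) i)

end GcdHolomorphicDiff

/-- Lemma 4.2 (complex analytic case): if `g_t`, `h_t` are families of polynomials whose
coefficients depend holomorphically on `t ∈ U ⊆ ℂ^N`, and the degrees of `g_t`, `h_t`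
and of their monic gcd `l_t = normalize (gcd g_t h_t)` are constant on `U`, then the
coefficients of `l_t` depend holomorphically on `t`. -/
theorem gcd_holomorphic_dependence (N : ℕ) (U : Set (EuclideanSpace ℂ (Fin N)))
    (hU : IsOpen U)
    (g h : EuclideanSpace ℂ (Fin N) → Polynomial ℂ)
    (hg : ∀ i : ℕ, DifferentiableOn ℂ (fun t => (g t).coeff i) U)
    (hh : ∀ i : ℕ, DifferentiableOn ℂ (fun t => (h t).coeff i) U)
    (m n L : ℕ)
    (hgdeg : ∀ t ∈ U, g t ≠ 0 ∧ (g t).natDegree = m)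
    (hhdeg : ∀ t ∈ U, h t ≠ 0 ∧ (h t).natDegree = n)
    (hLdeg : ∀ t ∈ U, (normalize (EuclideanDomain.gcd (g t) (h t))).natDegree = L) :
    ∀ i : ℕ, DifferentiableOn ℂ
      (fun t => (normalize (EuclideanDomain.gcd (g t) (h t))).coeff i) U := by
  classical
  intro i
  -- trivial case : U empty
  rcases Set.eq_empty_or_nonempty U with hUe | ⟨t₀, ht₀⟩
  · rw [hUe]; exact differentiableOn_empty
  -- L ≤ m and L ≤ n
  have hgcd_ne : ∀ t ∈ U, EuclideanDomain.gcd (g t) (h t) ≠ 0 := fun t ht h0 =>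
    (hgdeg t ht).1 (EuclideanDomain.gcd_eq_zero_iff.mp h0).1
  have hLm : L ≤ m := by
    have h1 := hLdeg t₀ ht₀
    have h2 : normalize (EuclideanDomain.gcd (g t₀) (h t₀)) ∣ g t₀ :=
      normalize_dvd_iff.mpr (EuclideanDomain.gcd_dvd_left _ _)
    have h3 := natDegree_le_of_dvd h2 (hgdeg t₀ ht₀).1
    rw [h1, (hgdeg t₀ ht₀).2] at h3
    exact h3
  have hLn : L ≤ n := by
    have h1 := hLdeg t₀ ht₀
    have h2 : normalize (EuclideanDomain.gcd (g t₀) (h t₀)) ∣ h t₀ :=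
      normalize_dvd_iff.mpr (EuclideanDomain.gcd_dvd_right _ _)
    have h3 := natDegree_le_of_dvd h2 (hhdeg t₀ ht₀).1
    rw [h1, (hhdeg t₀ ht₀).2] at h3
    exact h3
  set n' := n - L with hn'
  set m' := m - L with hm'
  have hmm : m = L + m' := by omega
  have hnn : n = L + n' := by omega
  by_cases hK : 0 < n' + m'
  · -- main case, via Cramer's rule
    have key : ∀ t ∈ U,
        (gcdMat L n' m' (g t) (h t)).det ≠ 0 ∧
          normalize (EuclideanDomain.gcd (g t) (h t)) =
            sumX ((gcdVec L n' m' (g t) (h t)) ∘ Sum.inl) * g t +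
              sumX ((gcdVec L n' m' (g t) (h t)) ∘ Sum.inr) * h t := fun t ht =>
      gcd_eq_comb (g t) (h t) (hgdeg t ht).1 (hhdeg t ht).1 L n' m' hK
        ((hgdeg t ht).2.trans hmm) ((hhdeg t ht).2.trans hnn) (hLdeg t ht)
    -- entries of the matrix are holomorphic
    have hentry_g : ∀ (c dd : ℕ), DifferentiableOn ℂ
        (fun t => (g t * X ^ c).coeff dd) U := by
      intro c dd
      simp only [coeff_mul_X_pow']
      split_ifs
      · exact hg _
      · exact differentiableOn_const 0
    have hentry_h : ∀ (c dd : ℕ), DifferentiableOn ℂ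
        (fun t => (h t * X ^ c).coeff dd) U := by
      intro c dd
      simp only [coeff_mul_X_pow']
      split_ifs
      · exact hh _
      · exact differentiableOn_const 0
    have hMdiff : ∀ j k, DifferentiableOn ℂ
        (fun t => gcdMat L n' m' (g t) (h t) j k) U := by
      intro j k
      rcases k with k₁ | k₂
      · exact hentry_g _ _
      · exact hentry_h _ _
    have hdetdiff : DifferentiableOn ℂ
        (fun t => (gcdMat L n' m' (g t) (h t)).det) U :=
      differentiableOn_det _ hMdiff
    have hvecdiff : ∀ k, DifferentiableOn ℂ
        (fun t => gcdVec L n' m' (g t) (h t) k) U := by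
      intro k
      have hcram : DifferentiableOn ℂ
          (fun t => Matrix.cramer (gcdMat L n' m' (g t) (h t)) (gcdE n' m') k) U := by
        simp only [Matrix.cramer_apply]
        apply differentiableOn_det
        intro j k'
        simp only [Matrix.updateCol_apply]
        split_ifs
        · exact differentiableOn_const _
        · exact hMdiff j k'
      have := (hdetdiff.inv (fun t ht => (key t ht).1)).mul hcram
      refine this.congr fun t ht => ?_
      simp [gcdVec, Pi.smul_apply, smul_eq_mul]
    -- assemble
    refine DifferentiableOn.congr (f := fun t =>
      (∑ k : Fin n', gcdVec L n' m' (g t) (h t) (Sum.inl k) * (g t * X ^ (k : ℕ)).coeff i) +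
      (∑ k : Fin m', gcdVec L n' m' (g t) (h t) (Sum.inr k) * (h t * X ^ (k : ℕ)).coeff i))
      ?_ ?_
    · apply DifferentiableOn.add
      · exact DifferentiableOn.fun_sum fun k _ => (hvecdiff (Sum.inl k)).mul (hentry_g _ _)
      · exact DifferentiableOn.fun_sum fun k _ => (hvecdiff (Sum.inr k)).mul (hentry_h _ _)
    · intro t ht
      rw [(key t ht).2, coeff_add, sumX_mul_coeff, sumX_mul_coeff]
      simp [Function.comp]
  · -- degenerate case : m = n = L, gcd is associate of h
    have heq : ∀ t ∈ U, normalize (EuclideanDomain.gcd (g t) (h t)) =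
        normalize (h t) := by
      intro t ht
      obtain ⟨u, hu⟩ := EuclideanDomain.gcd_dvd_right (g t) (h t)
      have hu0 : u ≠ 0 := fun h0 => (hhdeg t ht).1 (by rw [hu, h0, mul_zero])
      have hgcdL : (EuclideanDomain.gcd (g t) (h t)).natDegree = L := by
        have h3 : (normalize (EuclideanDomain.gcd (g t) (h t))).degree
            = (EuclideanDomain.gcd (g t) (h t)).degree := degree_normalize
        rw [← hLdeg t ht]
        exact natDegree_eq_natDegree h3.symm
      have hudeg : u.natDegree = 0 := by
        have h1 := natDegree_mul (hgcd_ne t ht) hu0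
        rw [← hu, (hhdeg t ht).2, hgcdL] at h1
        omega
      have huu : IsUnit u := by
        rw [eq_C_of_natDegree_eq_zero hudeg]
        refine isUnit_C.mpr (isUnit_iff_ne_zero.mpr ?_)
        intro h0
        apply hu0
        rw [eq_C_of_natDegree_eq_zero hudeg, h0, map_zero]
      have hassoc : Associated (EuclideanDomain.gcd (g t) (h t)) (h t) :=
        ⟨huu.unit, by rw [IsUnit.unit_spec, ← hu]⟩
      exact normalize_eq_normalize hassoc.dvd hassoc.symm.dvd
    have hne : ∀ t ∈ U, (h t).coeff n ≠ 0 := by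
      intro t ht
      have : (h t).coeff n = (h t).leadingCoeff := by
        rw [leadingCoeff, (hhdeg t ht).2]
      rw [this]
      exact leadingCoeff_ne_zero.mpr (hhdeg t ht).1
    refine DifferentiableOn.congr
      (f := fun t => (h t).coeff i * ((h t).coeff n)⁻¹) ?_ ?_
    · exact (hh i).mul ((hh n).inv hne)
    · intro t ht
      rw [heq t ht, normalize_apply, Polynomial.coe_normUnit_of_ne_zero (hhdeg t ht).1,
        coeff_mul_C, leadingCoeff, (hhdeg t ht).2]
end

section
/- Let U be an open subset of ℂ^N and let g, h, k : ℂ^N → Polynomial ℂ be families of polynomials depending holomorphically on the parameter on U, i.e. for every natural number i the coefficient functions t ↦ (g t).coeff i, t ↦ (h t).coeff i and t ↦ (k t).coeff i are complex differentiable on U. Suppose there are natural numbers m, L such that for all t ∈ U: g t ≠ 0 with natDegree (g t) = m, degree (h t) ≤ degree (g t), degree (k t) ≤ degree (g t), and the monic greatest common divisor l t = normalize (gcd (gcd (g t) (h t)) (k t)) of the three polynomials has natDegree (l t) = L. Then l depends holomorphically on the parameter: for every natural number i the function t ↦ (l t).coeff i is complex differentiable on U. -/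
open Polynomial

namespace GcdHolo

noncomputable def polyOf (s : ℕ) (v : Fin s → ℂ) : ℂ[X] :=
  ∑ i : Fin s, monomial (i : ℕ) (v i)

lemma polyOf_coeff (s : ℕ) (v : Fin s → ℂ) (j : ℕ) :
    (polyOf s v).coeff j = if h : j < s then v ⟨j, h⟩ else 0 := by
  rw [polyOf, finset_sum_coeff]
  simp only [coeff_monomial]
  split
  · next h =>
    rw [Finset.sum_eq_single (⟨j, h⟩ : Fin s)]
    · simp
    · intro i _ hne
      rw [if_neg]
      intro hij
      exact hne (by ext; simpa using hij)
    · simp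
  · next h =>
    apply Finset.sum_eq_zero
    intro i _
    rw [if_neg]
    intro hij
    exact h (hij ▸ i.isLt)

lemma polyOf_natDegree_lt (s : ℕ) (hs : 0 < s) (v : Fin s → ℂ) :
    (polyOf s v).natDegree < s := by
  have : (polyOf s v).natDegree ≤ s - 1 := by
    rw [natDegree_le_iff_coeff_eq_zero]
    intro j hj
    rw [polyOf_coeff, dif_neg]
    omega
  omega

lemma polyOf_coeffs (s : ℕ) (P : ℂ[X]) (h : P.natDegree < s) :
    polyOf s (fun i => P.coeff i) = P := by
  ext j
  rw [polyOf_coeff]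
  split
  · rfl
  · next hj => exact (coeff_eq_zero_of_natDegree_lt (by omega)).symm

noncomputable def polyOfL (s : ℕ) : (Fin s → ℂ) →ₗ[ℂ] ℂ[X] :=
  ∑ i : Fin s, (monomial (i : ℕ)).comp (LinearMap.proj i)

lemma polyOfL_apply (s : ℕ) (v : Fin s → ℂ) : polyOfL s v = polyOf s v := by
  simp [polyOfL, polyOf, LinearMap.sum_apply]

noncomputable def comboL (s : ℕ) (G Q : ℂ[X]) : ((Fin s ⊕ Fin s) → ℂ) →ₗ[ℂ] ℂ[X] :=
  ((LinearMap.mulRight ℂ G).comp ((polyOfL s).comp (LinearMap.funLeft ℂ ℂ Sum.inl))) +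
  ((LinearMap.mulRight ℂ Q).comp ((polyOfL s).comp (LinearMap.funLeft ℂ ℂ Sum.inr)))

lemma comboL_apply (s : ℕ) (G Q : ℂ[X]) (x : (Fin s ⊕ Fin s) → ℂ) :
    comboL s G Q x = polyOf s (x ∘ Sum.inl) * G + polyOf s (x ∘ Sum.inr) * Q := by
  simp [comboL, polyOfL_apply, LinearMap.funLeft]

noncomputable def rowsL (s : ℕ) (G Q : ℂ[X]) (L p : ℕ) :
    ((Fin s ⊕ Fin s) → ℂ) →ₗ[ℂ] (Fin p → ℂ) :=
  LinearMap.pi fun r => (lcoeff ℂ (L + 1 + (r : ℕ))).comp (comboL s G Q)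

lemma rowsL_apply (s : ℕ) (G Q : ℂ[X]) (L p : ℕ) (x : (Fin s ⊕ Fin s) → ℂ) (r : Fin p) :
    rowsL s G Q L p x r = (comboL s G Q x).coeff (L + 1 + (r : ℕ)) := rfl

lemma coeff_X_pow_mul'' (n j : ℕ) (P : ℂ[X]) :
    ((X : ℂ[X]) ^ n * P).coeff j = if n ≤ j then P.coeff (j - n) else 0 := by
  rw [X_pow_mul]
  exact coeff_mul_X_pow' P n j

lemma polyOf_mul_coeff (s : ℕ) (v : Fin s → ℂ) (G : ℂ[X]) (j : ℕ) :
    (polyOf s v * G).coeff j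
      = ∑ i : Fin s, v i * (if (i : ℕ) ≤ j then G.coeff (j - i) else 0) := by
  rw [polyOf, Finset.sum_mul, finset_sum_coeff]
  congr 1
  ext i
  have h1 : monomial (i : ℕ) (v i) * G = C (v i) * ((X : ℂ[X]) ^ (i : ℕ) * G) := by
    rw [← mul_assoc, C_mul_X_pow_eq_monomial]
  rw [h1, coeff_C_mul, coeff_X_pow_mul'']


lemma monic_dvd_eq {a b : ℂ[X]} (ha : a.Monic) (hb : b.Monic) (hdvd : a ∣ b)
    (hdeg : b.natDegree ≤ a.natDegree) : a = b := by
  obtain ⟨c, hc⟩ := hdvd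
  have hb0 : b ≠ 0 := hb.ne_zero
  have hc0 : c ≠ 0 := by rintro rfl; simp at hc; exact hb0 hc
  have hdc : b.natDegree = a.natDegree + c.natDegree := by
    rw [hc, natDegree_mul ha.ne_zero hc0]
  have hcd0 : c.natDegree = 0 := by omega
  have hcC : c = C (c.coeff 0) := eq_C_of_natDegree_eq_zero hcd0
  have hlc : b.leadingCoeff = a.leadingCoeff * c.leadingCoeff := by
    rw [hc, leadingCoeff_mul]
  rw [ha.leadingCoeff, hb.leadingCoeff] at hlc
  have : c.leadingCoeff = 1 := by rw [hlc]; ring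
  have : c = 1 := by
    rw [hcC]; rw [leadingCoeff, hcd0] at this; rw [this]; simp
  rw [hc, this, mul_one]

lemma natDegree_normalize (p : ℂ[X]) : (normalize p).natDegree = p.natDegree := by
  simp [natDegree, degree_normalize]

/-- Bézout identity with degree bounds. -/
lemma bezout_bound (G Q : ℂ[X]) (hG : G ≠ 0) (hQG : Q.degree ≤ G.degree) :
    ∃ a b : ℂ[X], a * G + b * Q = normalize (EuclideanDomain.gcd G Q) ∧
      a.natDegree ≤ G.natDegree ∧ b.natDegree ≤ G.natDegree := by
  classical
  set e := EuclideanDomain.gcd G Q with he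
  have he0 : e ≠ 0 := by
    rw [he, Ne, EuclideanDomain.gcd_eq_zero_iff]
    rintro ⟨rfl, -⟩; exact hG rfl
  set w : ℂ := ↑(normUnit e.leadingCoeff) with hw
  have hnorm : normalize e = e * C w := by
    rw [normalize_apply, Polynomial.coe_normUnit]
  have hBez : e = G * EuclideanDomain.gcdA G Q + Q * EuclideanDomain.gcdB G Q :=
    EuclideanDomain.gcd_eq_gcd_ab G Q
  by_cases hQ : Q = 0
  · refine ⟨C w, 0, ?_, ?_, ?_⟩
    · have : e = G := by rw [he, hQ, EuclideanDomain.gcd_zero_right]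
      rw [hnorm, this, hQ]; ring
    · simp
    · simp
  · -- Q ≠ 0
    obtain ⟨Q₁, hQ₁⟩ : e ∣ Q := EuclideanDomain.gcd_dvd_right G Q
    obtain ⟨G₁, hG₁⟩ : e ∣ G := EuclideanDomain.gcd_dvd_left G Q
    have hQ₁0 : Q₁ ≠ 0 := by rintro rfl; rw [mul_zero] at hQ₁; exact hQ (by rw [hQ₁])
    set A' : ℂ[X] := EuclideanDomain.gcdA G Q * C w with hA'
    set B' : ℂ[X] := EuclideanDomain.gcdB G Q * C w with hB'
    have hBez' : A' * G + B' * Q = normalize e := by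
      rw [hnorm, hBez]; ring
    set M : ℂ[X] := Q₁ * C Q₁.leadingCoeff⁻¹ with hM
    have hMmonic : M.Monic := monic_mul_leadingCoeff_inv hQ₁0
    set a : ℂ[X] := A' %ₘ M with ha
    set W : ℂ[X] := (A' /ₘ M) * C Q₁.leadingCoeff⁻¹ with hWdef
    have hAsplit : A' = a + W * Q₁ := by
      conv_lhs => rw [← modByMonic_add_div A' M]
      rw [ha, hWdef, hM]; ring
    set b : ℂ[X] := B' + W * G₁ with hb
    have hkey : a * G + b * Q = normalize e := by
      have : a * G + b * Q = A' * G + B' * Q + W * (G₁ * Q - Q₁ * G) := by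
        rw [hAsplit, hb]; ring
      rw [this, hBez']
      have : G₁ * Q - Q₁ * G = 0 := by rw [hG₁, hQ₁]; ring
      rw [this, mul_zero, add_zero]
    -- degree bounds
    have hdegQ₁ : Q₁.degree ≤ Q.degree := by
      rw [hQ₁]
      exact degree_le_mul_left Q₁ he0 |>.trans_eq (by rw [mul_comm]) |>.trans (le_refl _)
    have hdega : a.degree < M.degree := degree_modByMonic_lt A' hMmonic
    have hdegM : M.degree = Q₁.degree := by
      rw [hM, degree_mul, degree_C (inv_ne_zero (leadingCoeff_ne_zero.mpr hQ₁0)), add_zero]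
    have hdegaQ : a.degree ≤ Q.degree := le_trans (le_of_lt (hdega.trans_le (hdegM.le.trans hdegQ₁))) (le_refl _)
    have hna : a.natDegree ≤ G.natDegree := natDegree_le_natDegree (hdegaQ.trans hQG)
    have hnaQ : a.natDegree ≤ Q.natDegree := natDegree_le_natDegree hdegaQ
    refine ⟨a, b, hkey, hna, ?_⟩
    by_cases hb0 : b = 0
    · simp [hb0]
    · have hbQ : b * Q = normalize e - a * G := by rw [← hkey]; ring
      have h1 : (b * Q).natDegree ≤ Q.natDegree + G.natDegree := by
        rw [hbQ]
        refine (natDegree_sub_le _ _).trans ?_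
        have h2 : (normalize e).natDegree ≤ Q.natDegree :=
          (natDegree_normalize e) ▸ natDegree_le_of_dvd ⟨Q₁, hQ₁⟩ hQ
        have h3 : (a * G).natDegree ≤ Q.natDegree + G.natDegree :=
          (natDegree_mul_le).trans (by omega)
        have h4 : Q.natDegree ≤ Q.natDegree + G.natDegree := by omega
        omega
      rw [natDegree_mul hb0 hQ] at h1
      omega

/-- Syzygy classification for two coprime-after-division polynomials. -/
lemma syzygy {G Q l0 G₁ Q₁ a₀ b₀ : ℂ[X]} (hl0 : l0 ≠ 0) (hG₁0 : G₁ ≠ 0)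
    (hGf : G = l0 * G₁) (hQf : Q = l0 * Q₁) (hBez : a₀ * G₁ + b₀ * Q₁ = 1)
    {α β : ℂ[X]} (hrel : α * G + β * Q = 0) :
    ∃ c, α = c * Q₁ ∧ β = -(c * G₁) := by
  have h1 : l0 * (α * G₁ + β * Q₁) = 0 := by rw [← hrel, hGf, hQf]; ring
  have h2 : α * G₁ + β * Q₁ = 0 := by
    rcases mul_eq_zero.mp h1 with h | h
    · exact absurd h hl0
    · exact h
  set c : ℂ[X] := -(a₀ * β - b₀ * α) with hc
  have hβ : β = -(c * G₁) := by
    have : β = β * (a₀ * G₁ + b₀ * Q₁) := by rw [hBez, mul_one]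
    have hβQ : β * Q₁ = -(α * G₁) := by linear_combination h2
    calc β = β * (a₀ * G₁ + b₀ * Q₁) := this
    _ = a₀ * β * G₁ + b₀ * (β * Q₁) := by ring
    _ = a₀ * β * G₁ + b₀ * (-(α * G₁)) := by rw [hβQ]
    _ = -(c * G₁) := by rw [hc]; ring
  refine ⟨c, ?_, hβ⟩
  have h3 : α * G₁ = c * Q₁ * G₁ := by
    have : α * G₁ = -(β * Q₁) := by linear_combination h2
    rw [this, hβ]; ring
  have := mul_right_cancel₀ hG₁0 h3
  exact this


lemma diffOn_prod {E : Type*} [NormedAddCommGroup E] [NormedSpace ℂ E]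
    {ι : Type*} (s : Finset ι) (f : ι → E → ℂ) {S : Set E}
    (h : ∀ i ∈ s, DifferentiableOn ℂ (f i) S) :
    DifferentiableOn ℂ (fun t => ∏ i ∈ s, f i t) S := by
  classical
  induction s using Finset.induction with
  | empty => simp [differentiableOn_const]
  | insert a s' hnot ih =>
    next =>
      simp only [Finset.prod_insert hnot]
      exact (h a (Finset.mem_insert_self a s')).mul
        (ih (fun i hi => h i (Finset.mem_insert_of_mem hi)))

lemma diffOn_det {E : Type*} [NormedAddCommGroup E] [NormedSpace ℂ E]
    {ι : Type*} [Fintype ι] [DecidableEq ι] {M : E → Matrix ι ι ℂ} {S : Set E}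
    (h : ∀ i j, DifferentiableOn ℂ (fun t => M t i j) S) :
    DifferentiableOn ℂ (fun t => (M t).det) S := by
  simp only [Matrix.det_apply, Units.smul_def, zsmul_eq_mul]
  apply DifferentiableOn.fun_sum
  intro σ _
  exact (differentiableOn_const _).mul (diffOn_prod _ _ (fun i _ => h (σ i) i))


end GcdHolo
namespace GcdHolo

lemma polyOf_single (s : ℕ) (i : Fin s) (a : ℂ) :
    polyOf s (fun j => if j = i then a else 0) = monomial (i : ℕ) a := by
  ext j
  rw [polyOf_coeff, coeff_monomial]
  by_cases hj : j < s
  · rw [dif_pos hj]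
    by_cases hij : (⟨j, hj⟩ : Fin s) = i
    · rw [if_pos hij, if_pos (by rw [← hij])]
    · rw [if_neg hij, if_neg (by intro h; exact hij (by ext; exact h.symm))]
  · rw [dif_neg hj, if_neg (by intro h; exact hj (h ▸ i.isLt))]

lemma polyOf_zero (s : ℕ) : polyOf s (fun _ => (0:ℂ)) = 0 := by
  simp [polyOf]

lemma rows_entry (s : ℕ) (G Q : ℂ[X]) (L p : ℕ) (r : Fin p) (c : Fin s ⊕ Fin s) :
    LinearMap.toMatrix' (rowsL s G Q L p) r c =
      Sum.elim
        (fun i : Fin s => if (i : ℕ) ≤ L + 1 + (r : ℕ) then G.coeff (L + 1 + (r : ℕ) - i) else 0)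
        (fun i : Fin s => if (i : ℕ) ≤ L + 1 + (r : ℕ) then Q.coeff (L + 1 + (r : ℕ) - i) else 0)
        c := by
  rw [LinearMap.toMatrix'_apply, rowsL_apply, comboL_apply]
  cases c with
  | inl i =>
    have h1 : (Pi.single (Sum.inl i : Fin s ⊕ Fin s) (1:ℂ) ∘ Sum.inl)
        = fun j => if j = i then (1:ℂ) else 0 := by
      funext j; simp [Function.comp, Pi.single_apply]
    have h2 : (Pi.single (Sum.inl i : Fin s ⊕ Fin s) (1:ℂ) ∘ Sum.inr)
        = fun _ => (0:ℂ) := by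
      funext j; simp [Function.comp]
    rw [h1, h2, polyOf_single, polyOf_zero, zero_mul, add_zero, Sum.elim_inl]
    have : monomial (i:ℕ) (1:ℂ) = (X:ℂ[X]) ^ (i:ℕ) := (X_pow_eq_monomial _).symm
    rw [this, coeff_X_pow_mul'']
  | inr i =>
    have h1 : (Pi.single (Sum.inr i : Fin s ⊕ Fin s) (1:ℂ) ∘ Sum.inl)
        = fun _ => (0:ℂ) := by
      funext j; simp [Function.comp]
    have h2 : (Pi.single (Sum.inr i : Fin s ⊕ Fin s) (1:ℂ) ∘ Sum.inr)
        = fun j => if j = i then (1:ℂ) else 0 := by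
      funext j; simp [Function.comp, Pi.single_apply]
    rw [h1, h2, polyOf_single, polyOf_zero, zero_mul, zero_add, Sum.elim_inr]
    have : monomial (i:ℕ) (1:ℂ) = (X:ℂ[X]) ^ (i:ℕ) := (X_pow_eq_monomial _).symm
    rw [this, coeff_X_pow_mul'']

end GcdHolo
namespace GcdHolo

lemma two_poly_local {E : Type*} [NormedAddCommGroup E] [NormedSpace ℂ E]
    {V : Set E} (hV : IsOpen V)
    (g q : E → ℂ[X])
    (hgd : ∀ i : ℕ, DifferentiableOn ℂ (fun t => (g t).coeff i) V)
    (hqd : ∀ i : ℕ, DifferentiableOn ℂ (fun t => (q t).coeff i) V)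
    (m L : ℕ)
    (hgm : ∀ t ∈ V, g t ≠ 0 ∧ (g t).natDegree = m)
    (hqg : ∀ t ∈ V, (q t).degree ≤ (g t).degree)
    (hLle : ∀ t ∈ V, L ≤ (EuclideanDomain.gcd (g t) (q t)).natDegree)
    {t0 : E} (ht0 : t0 ∈ V)
    (hL0 : (EuclideanDomain.gcd (g t0) (q t0)).natDegree = L) :
    ∃ W, IsOpen W ∧ t0 ∈ W ∧ W ⊆ V ∧
      (∀ t ∈ W, (EuclideanDomain.gcd (g t) (q t)).natDegree = L) ∧
      ∀ i : ℕ, DifferentiableOn ℂ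
        (fun t => (normalize (EuclideanDomain.gcd (g t) (q t))).coeff i) W := by
  classical
  obtain ⟨hg0, hm0⟩ := hgm t0 ht0
  set e0 : ℂ[X] := EuclideanDomain.gcd (g t0) (q t0) with he0def
  have he0 : e0 ≠ 0 := by
    rw [he0def, Ne, EuclideanDomain.gcd_eq_zero_iff]; rintro ⟨h1, -⟩; exact hg0 h1
  have hLm : L ≤ m := by
    rw [← hL0, ← hm0]
    exact natDegree_le_of_dvd (EuclideanDomain.gcd_dvd_left _ _) hg0
  set s : ℕ := 2 * m + 1 with hs
  set p : ℕ := 3 * m - L with hp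
  set F : E → ((Fin s ⊕ Fin s) → ℂ) →ₗ[ℂ] (Fin p → ℂ) :=
    fun t => rowsL s (g t) (q t) L p with hF
  set A : E → Matrix (Fin p) (Fin s ⊕ Fin s) ℂ :=
    fun t => LinearMap.toMatrix' (F t) with hA
  -- entries of A are differentiable on V
  have hAd : ∀ (r : Fin p) (c : Fin s ⊕ Fin s),
      DifferentiableOn ℂ (fun t => A t r c) V := by
    intro r c
    have hEq : ∀ t, A t r c = Sum.elim
        (fun i : Fin s => if (i : ℕ) ≤ L + 1 + (r : ℕ) then (g t).coeff (L + 1 + (r : ℕ) - i) else 0)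
        (fun i : Fin s => if (i : ℕ) ≤ L + 1 + (r : ℕ) then (q t).coeff (L + 1 + (r : ℕ) - i) else 0)
        c := fun t => rows_entry s (g t) (q t) L p r c
    cases c with
    | inl i =>
      simp only [hEq, Sum.elim_inl]
      split_ifs with h
      · exact hgd _
      · exact differentiableOn_const 0
    | inr i =>
      simp only [hEq, Sum.elim_inr]
      split_ifs with h
      · exact hqd _
      · exact differentiableOn_const 0
  -- degree bound for combinations killed by F
  have hqdeg : ∀ t ∈ V, (q t).natDegree ≤ m := by
    intro t ht
    exact (hgm t ht).2 ▸ natDegree_le_natDegree (hqg t ht)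
  have hPdegle : ∀ t ∈ V, ∀ x : (Fin s ⊕ Fin s) → ℂ, F t x = 0 →
      (comboL s (g t) (q t) x).natDegree ≤ L := by
    intro t ht x hFx
    have hdeg3 : (comboL s (g t) (q t) x).natDegree ≤ 3 * m := by
      rw [comboL_apply]
      refine (natDegree_add_le _ _).trans (max_le ?_ ?_)
      · refine natDegree_mul_le.trans ?_
        have h1 := polyOf_natDegree_lt s (by omega) (x ∘ Sum.inl)
        have h2 := (hgm t ht).2
        omega
      · refine natDegree_mul_le.trans ?_
        have h1 := polyOf_natDegree_lt s (by omega) (x ∘ Sum.inr)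
        have h2 := hqdeg t ht
        omega
    rw [natDegree_le_iff_coeff_eq_zero]
    intro j hj
    by_cases h3 : j ≤ 3 * m
    · have hr : j - L - 1 < p := by omega
      have hje : j = L + 1 + ((⟨j - L - 1, hr⟩ : Fin p) : ℕ) := by simp; omega
      rw [hje]
      exact congrFun hFx ⟨j - L - 1, hr⟩
    · exact coeff_eq_zero_of_natDegree_lt (by omega)
  -- Bezout data at t0
  obtain ⟨a₀, b₀, hbez, hna, hnb⟩ := bezout_bound (g t0) (q t0) hg0 (hqg t0 ht0)
  set x0 : (Fin s ⊕ Fin s) → ℂ :=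
    Sum.elim (fun i : Fin s => a₀.coeff i) (fun i : Fin s => b₀.coeff i) with hx0def
  have hcombo0 : comboL s (g t0) (q t0) x0 = normalize e0 := by
    rw [comboL_apply]
    have h1 : (x0 ∘ Sum.inl) = fun i : Fin s => a₀.coeff i := rfl
    have h2 : (x0 ∘ Sum.inr) = fun i : Fin s => b₀.coeff i := rfl
    rw [h1, h2, polyOf_coeffs s a₀ (by omega), polyOf_coeffs s b₀ (by omega)]
    exact hbez
  have hl0deg : (normalize e0).natDegree = L := by rw [natDegree_normalize, hL0]
  have hF0 : F t0 x0 = 0 := by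
    funext r
    show (comboL s (g t0) (q t0) x0).coeff (L + 1 + (r : ℕ)) = 0
    rw [hcombo0]
    exact coeff_eq_zero_of_natDegree_lt (by omega)
  -- surjectivity of F t0
  have hcod : Module.finrank ℂ (Fin p → ℂ) = p := by
    simp [Module.finrank_fintype_fun_eq_card]
  have hsurj : Function.Surjective (F t0) := by
    have hl0dvdG : normalize e0 ∣ g t0 :=
      dvd_trans (associated_normalize e0).symm.dvd (EuclideanDomain.gcd_dvd_left _ _)
    have hl0dvdQ : normalize e0 ∣ q t0 :=
      dvd_trans (associated_normalize e0).symm.dvd (EuclideanDomain.gcd_dvd_right _ _)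
    obtain ⟨G₁, hG₁⟩ := hl0dvdG
    obtain ⟨Q₁, hQ₁⟩ := hl0dvdQ
    have hl00 : normalize e0 ≠ 0 := fun hcon => he0 (normalize_eq_zero.mp hcon)
    have hG₁0 : G₁ ≠ 0 := by rintro rfl; rw [mul_zero] at hG₁; exact hg0 hG₁
    have hcof : a₀ * G₁ + b₀ * Q₁ = 1 := by
      apply mul_left_cancel₀ hl00
      rw [mul_one]
      calc normalize e0 * (a₀ * G₁ + b₀ * Q₁)
          = a₀ * (normalize e0 * G₁) + b₀ * (normalize e0 * Q₁) := by ring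
        _ = a₀ * g t0 + b₀ * q t0 := by rw [← hG₁, ← hQ₁]
        _ = normalize e0 := hbez
    have hG₁deg : G₁.natDegree = m - L := by
      have h1 : (g t0).natDegree = (normalize e0).natDegree + G₁.natDegree := by
        rw [hG₁, natDegree_mul hl00 hG₁0]
      omega
    set J1 : ((Fin (m+L+1) → ℂ) × ℂ) →ₗ[ℂ] (ℂ[X] × ℂ[X]) :=
      LinearMap.prod
        ((LinearMap.mulRight ℂ Q₁).comp
            ((polyOfL (m+L+1)).comp (LinearMap.fst ℂ (Fin (m+L+1) → ℂ) ℂ))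
          + (LinearMap.toSpanSingleton ℂ ℂ[X] a₀).comp (LinearMap.snd ℂ (Fin (m+L+1) → ℂ) ℂ))
        ((LinearMap.mulRight ℂ (-G₁)).comp
            ((polyOfL (m+L+1)).comp (LinearMap.fst ℂ (Fin (m+L+1) → ℂ) ℂ))
          + (LinearMap.toSpanSingleton ℂ ℂ[X] b₀).comp (LinearMap.snd ℂ (Fin (m+L+1) → ℂ) ℂ))
      with hJ1
    set enc2 : (ℂ[X] × ℂ[X]) →ₗ[ℂ] ((Fin s ⊕ Fin s) → ℂ) :=
      LinearMap.pi (fun cc => Sum.elim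
        (fun i : Fin s => (lcoeff ℂ (i : ℕ)).comp (LinearMap.fst ℂ ℂ[X] ℂ[X]))
        (fun i : Fin s => (lcoeff ℂ (i : ℕ)).comp (LinearMap.snd ℂ ℂ[X] ℂ[X])) cc) with henc2
    set J := enc2.comp J1 with hJdef
    have hJapp : ∀ (vμ : (Fin (m+L+1) → ℂ) × ℂ) (i : Fin s),
        (J vμ (Sum.inl i) = (polyOf (m+L+1) vμ.1 * Q₁ + vμ.2 • a₀).coeff i)
        ∧ (J vμ (Sum.inr i) = (polyOf (m+L+1) vμ.1 * (-G₁) + vμ.2 • b₀).coeff i) := by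
      intro vμ i
      constructor <;>
        simp [hJdef, hJ1, henc2, LinearMap.pi_apply, polyOfL_apply,
          LinearMap.toSpanSingleton_apply]
    have hkerle : LinearMap.ker (F t0) ≤ LinearMap.range J := by
      intro x hx
      rw [LinearMap.mem_ker] at hx
      have hdegP := hPdegle t0 ht0 x hx
      have hPj : comboL s (g t0) (q t0) x
          = polyOf s (x ∘ Sum.inl) * g t0 + polyOf s (x ∘ Sum.inr) * q t0 :=
        comboL_apply _ _ _ _
      have hePdvd : normalize e0 ∣ comboL s (g t0) (q t0) x := by
        rw [hPj]
        exact dvd_add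
          ((dvd_trans (associated_normalize e0).symm.dvd
            (EuclideanDomain.gcd_dvd_left _ _)).mul_left _)
          ((dvd_trans (associated_normalize e0).symm.dvd
            (EuclideanDomain.gcd_dvd_right _ _)).mul_left _)
      obtain ⟨sP, hsP⟩ := hePdvd
      have hμex : ∃ μ : ℂ, comboL s (g t0) (q t0) x = C μ * normalize e0 := by
        by_cases h0 : sP = 0
        · exact ⟨0, by rw [hsP, h0]; simp⟩
        · have h1 : (comboL s (g t0) (q t0) x).natDegree = L + sP.natDegree := by
            rw [hsP, natDegree_mul hl00 h0, hl0deg]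
          have h2 : sP.natDegree = 0 := by omega
          refine ⟨sP.coeff 0, ?_⟩
          rw [hsP, ← eq_C_of_natDegree_eq_zero h2]; ring
      obtain ⟨μ, hμeq⟩ := hμex
      have hrel : (polyOf s (x ∘ Sum.inl) - μ • a₀) * g t0
          + (polyOf s (x ∘ Sum.inr) - μ • b₀) * q t0 = 0 := by
        have hexp : (polyOf s (x ∘ Sum.inl) - μ • a₀) * g t0
            + (polyOf s (x ∘ Sum.inr) - μ • b₀) * q t0
            = (polyOf s (x ∘ Sum.inl) * g t0 + polyOf s (x ∘ Sum.inr) * q t0)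
              - C μ * (a₀ * g t0 + b₀ * q t0) := by
          simp only [smul_eq_C_mul]; ring
        rw [hexp, hbez, ← hPj, hμeq]
        ring
      obtain ⟨c, hc1, hc2⟩ := syzygy hl00 hG₁0 hG₁ hQ₁ hcof hrel
      have hbdeg : (polyOf s (x ∘ Sum.inr)).natDegree ≤ 2 * m := by
        have := polyOf_natDegree_lt s (by omega) (x ∘ Sum.inr); omega
      have hcdeg : c.natDegree ≤ m + L := by
        by_cases hc0 : c = 0
        · simp [hc0]
        · have h3 : (polyOf s (x ∘ Sum.inr) - μ • b₀).natDegree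
              = c.natDegree + G₁.natDegree := by
            rw [hc2, natDegree_neg, natDegree_mul hc0 hG₁0]
          have h4 : (polyOf s (x ∘ Sum.inr) - μ • b₀).natDegree ≤ 2 * m := by
            refine (natDegree_sub_le _ _).trans (max_le hbdeg ?_)
            exact (natDegree_smul_le _ _).trans (by omega)
          omega
      refine ⟨(fun i : Fin (m+L+1) => c.coeff i, μ), ?_⟩
      have hpc : polyOf (m+L+1) (fun i : Fin (m+L+1) => c.coeff i) = c :=
        polyOf_coeffs _ _ (by omega)
      have hfst : c * Q₁ + μ • a₀ = polyOf s (x ∘ Sum.inl) := by rw [← hc1]; ring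
      have hsnd : c * (-G₁) + μ • b₀ = polyOf s (x ∘ Sum.inr) := by
        have hneg : c * (-G₁) = -(c * G₁) := by ring
        rw [hneg, ← hc2]; ring
      funext cc
      cases cc with
      | inl i =>
        rw [(hJapp _ i).1]
        show (polyOf (m+L+1) (fun i : Fin (m+L+1) => c.coeff i) * Q₁ + μ • a₀).coeff i
          = x (Sum.inl i)
        rw [hpc, hfst, polyOf_coeff, dif_pos i.isLt]
        simp
      | inr i =>
        rw [(hJapp _ i).2]
        show (polyOf (m+L+1) (fun i : Fin (m+L+1) => c.coeff i) * (-G₁) + μ • b₀).coeff i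
          = x (Sum.inr i)
        rw [hpc, hsnd, polyOf_coeff, dif_pos i.isLt]
        simp
    have hkfr : Module.finrank ℂ (LinearMap.ker (F t0)) ≤ m + L + 2 := by
      refine (Submodule.finrank_mono hkerle).trans ((LinearMap.finrank_range_le J).trans ?_)
      simp [Module.finrank_fintype_fun_eq_card]
    have hrn := LinearMap.finrank_range_add_finrank_ker (F t0)
    have hdom : Module.finrank ℂ ((Fin s ⊕ Fin s) → ℂ) = 2 * s := by
      simp [Module.finrank_fintype_fun_eq_card]
      omega
    rw [hdom] at hrn
    have hrle : Module.finrank ℂ (LinearMap.range (F t0)) ≤ p := by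
      have h5 := Submodule.finrank_le (LinearMap.range (F t0))
      rw [hcod] at h5
      exact h5
    have hreq : Module.finrank ℂ (LinearMap.range (F t0)) = p := by omega
    rw [← LinearMap.range_eq_top]
    exact Submodule.eq_top_of_finrank_eq (by rw [hreq, hcod])
  -- column selection
  obtain ⟨C, hCind⟩ : ∃ C : Fin p → (Fin s ⊕ Fin s),
      LinearIndependent ℂ (fun i : Fin p => (fun r => A t0 r (C i))) := by
    set cols : (Fin s ⊕ Fin s) → (Fin p → ℂ) := fun c r => A t0 r c with hcols
    have hcolspan : Submodule.span ℂ (Set.range cols) = ⊤ := by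
      rw [eq_top_iff]
      rintro y -
      obtain ⟨x, hx⟩ := hsurj y
      have hy : y = ∑ c, x c • cols c := by
        rw [← hx]
        funext r
        rw [Finset.sum_apply]
        have h1 : F t0 x r = ((A t0).mulVec x) r := by
          rw [hA, ← Matrix.toLin'_apply, Matrix.toLin'_toMatrix']
        rw [h1]
        simp [Matrix.mulVec, dotProduct, hcols, mul_comm]
      rw [hy]
      exact Submodule.sum_mem _
        (fun c _ => Submodule.smul_mem _ _ (Submodule.subset_span ⟨c, rfl⟩))
    obtain ⟨bset, hbsub, hbspan, hbind⟩ := exists_linearIndependent ℂ (Set.range cols)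
    rw [hcolspan] at hbspan
    have hbfin : bset.Finite := hbind.setFinite
    haveI := hbfin.fintype
    set bas : Module.Basis bset ℂ (Fin p → ℂ) :=
      Module.Basis.mk hbind (by rw [Subtype.range_coe, hbspan]) with hbas
    have hcard : Fintype.card bset = p := by
      have h1 := Module.finrank_eq_card_basis bas
      rw [hcod] at h1
      exact h1.symm
    set eqv : Fin p ≃ bset := (Fintype.equivFinOfCardEq hcard).symm with heqv
    have hpre : ∀ i : Fin p, ∃ c, cols c = ((eqv i : Fin p → ℂ)) := fun i => hbsub (eqv i).2
    refine ⟨fun i => (hpre i).choose, ?_⟩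
    have hconv : (fun i : Fin p => (fun r => A t0 r ((hpre i).choose)))
        = fun i => (Subtype.val ∘ eqv) i := by
      funext i
      exact (hpre i).choose_spec
    rw [hconv]
    exact hbind.comp eqv (eqv.injective)
  set M : E → Matrix (Fin p) (Fin p) ℂ := fun t => (A t).submatrix id C with hM
  set δ : E → ℂ := fun t => (M t).det with hδ
  have hδd : DifferentiableOn ℂ δ V := diffOn_det (fun i j => hAd i (C j))
  have hδ0 : δ t0 ≠ 0 := by
    intro h
    obtain ⟨v, hv0, hv⟩ := (Matrix.exists_mulVec_eq_zero_iff).mpr h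
    apply hv0
    funext i
    refine Fintype.linearIndependent_iff.mp hCind v ?_ i
    funext r
    rw [Finset.sum_apply]
    have h2 : ∑ c, (v c • fun r' => A t0 r' (C c)) r = (M t0).mulVec v r := by
      simp [Matrix.mulVec, dotProduct, hM, Matrix.submatrix_apply, mul_comm]
    rw [h2, hv]
  set V1 : Set E := V ∩ δ ⁻¹' {(0:ℂ)}ᶜ with hV1
  have hV1open : IsOpen V1 :=
    ContinuousOn.isOpen_inter_preimage hδd.continuousOn hV isOpen_compl_singleton
  have ht0V1 : t0 ∈ V1 := ⟨ht0, by simp [hδ0]⟩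
  have hV1sub : V1 ⊆ V := Set.inter_subset_left
  -- the holomorphic kernel family
  set w : E → Fin p → ℂ := fun t => (A t).mulVec x0 with hw
  set u : E → Fin p → ℂ := fun t => (δ t)⁻¹ • (M t).cramer (-(w t)) with hu
  set xF : E → (Fin s ⊕ Fin s) → ℂ :=
    fun t => x0 + fun cc => ∑ i, if C i = cc then u t i else 0 with hxF
  have hMu : ∀ t ∈ V1, (M t).mulVec (u t) = -(w t) := by
    intro t ht
    rw [hu]
    simp only
    rw [Matrix.mulVec_smul, Matrix.mulVec_cramer, smul_smul,
      inv_mul_cancel₀ (by exact ht.2), one_smul]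
  have hAxF : ∀ t ∈ V1, (A t).mulVec (xF t) = 0 := by
    intro t ht
    have hsplit : (A t).mulVec (xF t)
        = (A t).mulVec x0 + (A t).mulVec (fun cc => ∑ i, if C i = cc then u t i else 0) := by
      rw [hxF]; exact Matrix.mulVec_add _ _ _
    have hext : (A t).mulVec (fun cc => ∑ i, if C i = cc then u t i else 0)
        = (M t).mulVec (u t) := by
      funext r
      simp only [Matrix.mulVec, dotProduct, hM, Matrix.submatrix_apply, id_eq]
      calc ∑ cc, A t r cc * ∑ i, (if C i = cc then u t i else 0)
          = ∑ cc, ∑ i, A t r cc * (if C i = cc then u t i else 0) := by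
            simp [Finset.mul_sum]
        _ = ∑ i, ∑ cc, (if C i = cc then A t r cc * u t i else 0) := by
            rw [Finset.sum_comm]
            congr 1; funext i; congr 1; funext cc
            by_cases h : C i = cc <;> simp [h]
        _ = ∑ i, A t r (C i) * u t i := by
            congr 1; funext i
            rw [Finset.sum_ite_eq]
            simp
    rw [hsplit, hext, hMu t ht, hw]
    simp
  have hxker : ∀ t ∈ V1, F t (xF t) = 0 := by
    intro t ht
    have := hAxF t ht
    rwa [hA, ← Matrix.toLin'_apply, Matrix.toLin'_toMatrix'] at this
  -- differentiability of the kernel family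
  have hwd : ∀ r : Fin p, DifferentiableOn ℂ (fun t => w t r) V1 := by
    intro r
    have hexp : (fun t => w t r) = fun t => ∑ c, A t r c * x0 c := by
      funext t
      show (A t).mulVec x0 r = _
      simp [Matrix.mulVec, dotProduct]
    rw [hexp]
    exact DifferentiableOn.fun_sum
      (fun c _ => ((hAd r c).mono hV1sub).mul (differentiableOn_const _))
  have hud : ∀ i : Fin p, DifferentiableOn ℂ (fun t => u t i) V1 := by
    intro i
    have hcram : DifferentiableOn ℂ (fun t => (M t).cramer (-(w t)) i) V1 := by
      have hexp : (fun t => (M t).cramer (-(w t)) i)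
          = fun t => ((M t).updateCol i (-(w t))).det := by
        funext t
        rw [Matrix.cramer_apply]
      rw [hexp]
      apply diffOn_det
      intro r j
      have hexp2 : (fun t => (M t).updateCol i (-(w t)) r j)
          = fun t => if j = i then -(w t r) else M t r j := by
        funext t
        rw [Matrix.updateCol_apply]
        simp
      rw [hexp2]
      split_ifs with hji
      · exact (hwd r).neg
      · exact (hAd r (C j)).mono hV1sub
    have hexp3 : (fun t => u t i) = fun t => (δ t)⁻¹ * (M t).cramer (-(w t)) i := by
      funext t
      show ((δ t)⁻¹ • (M t).cramer (-(w t))) i = _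
      simp
    rw [hexp3]
    exact ((hδd.mono hV1sub).inv (fun t ht => ht.2)).mul hcram
  have hxd : ∀ cc, DifferentiableOn ℂ (fun t => xF t cc) V1 := by
    intro cc
    have hexp : (fun t => xF t cc)
        = fun t => x0 cc + ∑ i, if C i = cc then u t i else 0 := by
      funext t
      show (x0 + fun cc' => ∑ i, if C i = cc' then u t i else 0) cc = _
      simp
    rw [hexp]
    apply (differentiableOn_const _).add
    apply DifferentiableOn.fun_sum
    intro i _
    by_cases h : C i = cc
    · simp only [h, if_true]
      exact hud i
    · simp only [h, if_false]
      exact differentiableOn_const 0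
  have hw0 : w t0 = 0 := by
    rw [hw]
    have h1 : (A t0).mulVec x0 = F t0 x0 := by
      rw [hA, ← Matrix.toLin'_apply, Matrix.toLin'_toMatrix']
    simp only
    rw [h1, hF0]
  have hx0eq : xF t0 = x0 := by
    have hu0 : u t0 = 0 := by
      show (δ t0)⁻¹ • (M t0).cramer (-w t0) = 0
      rw [hw0]
      simp
    show x0 + (fun cc => ∑ i : Fin p, if C i = cc then u t0 i else 0) = x0
    rw [hu0]
    funext cc
    simp
  -- coefficients of the combination
  set P : E → ℂ[X] := fun t => comboL s (g t) (q t) (xF t) with hP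
  have hPd : ∀ j : ℕ, DifferentiableOn ℂ (fun t => (P t).coeff j) V1 := by
    intro j
    have hexp : (fun t => (P t).coeff j)
        = fun t =>
          (∑ i : Fin s, (xF t ∘ Sum.inl) i * (if (i:ℕ) ≤ j then (g t).coeff (j - i) else 0))
          + (∑ i : Fin s, (xF t ∘ Sum.inr) i * (if (i:ℕ) ≤ j then (q t).coeff (j - i) else 0)) := by
      funext t
      show (comboL s (g t) (q t) (xF t)).coeff j = _
      rw [comboL_apply, coeff_add, polyOf_mul_coeff, polyOf_mul_coeff]
    rw [hexp]
    apply DifferentiableOn.add <;> apply DifferentiableOn.fun_sum <;> intro i _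
    · apply (hxd (Sum.inl i)).mul
      by_cases h : (i:ℕ) ≤ j
      · simp only [h, if_true]
        exact (hgd _).mono hV1sub
      · simp only [h, if_false]
        exact differentiableOn_const 0
    · apply (hxd (Sum.inr i)).mul
      by_cases h : (i:ℕ) ≤ j
      · simp only [h, if_true]
        exact (hqd _).mono hV1sub
      · simp only [h, if_false]
        exact differentiableOn_const 0
  set φ : E → ℂ := fun t => (P t).coeff L with hφ
  have hφd : DifferentiableOn ℂ φ V1 := hPd L
  have hφ0 : φ t0 = 1 := by
    rw [hφ]
    simp only
    rw [hP]
    simp only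
    rw [hx0eq, hcombo0, ← hl0deg]
    exact (monic_normalize he0).coeff_natDegree
  set V2 : Set E := V1 ∩ φ ⁻¹' {(0:ℂ)}ᶜ with hV2
  have hV2open : IsOpen V2 :=
    ContinuousOn.isOpen_inter_preimage hφd.continuousOn hV1open isOpen_compl_singleton
  have ht0V2 : t0 ∈ V2 := ⟨ht0V1, by simp [hφ0]⟩
  have hV2sub : V2 ⊆ V := fun t ht => hV1sub ht.1
  -- final identification
  have hkey : ∀ t ∈ V2, (EuclideanDomain.gcd (g t) (q t)).natDegree = L ∧
      ∀ i : ℕ, (normalize (EuclideanDomain.gcd (g t) (q t))).coeff i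
        = (φ t)⁻¹ * (P t).coeff i := by
    intro t ht
    have htV : t ∈ V := hV2sub ht
    have hφne : φ t ≠ 0 := ht.2
    have hφPL : φ t = (P t).coeff L := rfl
    have hPne : P t ≠ 0 := by
      intro hcon
      apply hφne
      rw [hφPL, hcon, coeff_zero]
    have hxk := hxker t ht.1
    have hdegP : (P t).natDegree ≤ L := hPdegle t htV _ hxk
    have hdvd : EuclideanDomain.gcd (g t) (q t) ∣ P t := by
      show _ ∣ comboL s (g t) (q t) (xF t)
      rw [comboL_apply]
      exact dvd_add ((EuclideanDomain.gcd_dvd_left _ _).mul_left _)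
        ((EuclideanDomain.gcd_dvd_right _ _).mul_left _)
    have het0 : EuclideanDomain.gcd (g t) (q t) ≠ 0 := by
      intro hcon
      exact hPne (zero_dvd_iff.mp (hcon ▸ hdvd))
    have hdegeq : (EuclideanDomain.gcd (g t) (q t)).natDegree = L :=
      le_antisymm ((natDegree_le_of_dvd hdvd hPne).trans hdegP) (hLle t htV)
    refine ⟨hdegeq, ?_⟩
    obtain ⟨sP, hsP⟩ := hdvd
    have hsP0 : sP ≠ 0 := by
      intro hcon
      exact hPne (by rw [hsP, hcon, mul_zero])
    have hPLn : (P t).natDegree = L :=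
      le_antisymm hdegP (le_natDegree_of_ne_zero (hφPL ▸ hφne))
    have hsdeg : sP.natDegree = 0 := by
      have h1 : (P t).natDegree
          = (EuclideanDomain.gcd (g t) (q t)).natDegree + sP.natDegree := by
        rw [hsP, natDegree_mul het0 hsP0]
      omega
    set v : ℂ := sP.coeff 0 with hvdef
    have hsPC : sP = Polynomial.C v := eq_C_of_natDegree_eq_zero hsdeg
    have hv0 : v ≠ 0 := by
      intro hcon
      exact hsP0 (by rw [hsPC, hcon, map_zero])
    set wN : ℂ := ↑(normUnit (EuclideanDomain.gcd (g t) (q t)).leadingCoeff) with hwNdef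
    have hnorm : normalize (EuclideanDomain.gcd (g t) (q t))
        = EuclideanDomain.gcd (g t) (q t) * Polynomial.C wN := by
      rw [normalize_apply, Polynomial.coe_normUnit]
    have hlcet : (EuclideanDomain.gcd (g t) (q t)).coeff L ≠ 0 := by
      rw [← hdegeq, coeff_natDegree]
      exact leadingCoeff_ne_zero.mpr het0
    have hnd : (normalize (EuclideanDomain.gcd (g t) (q t))).natDegree = L := by
      rw [natDegree_normalize, hdegeq]
    have hwval : (EuclideanDomain.gcd (g t) (q t)).coeff L * wN = 1 := by
      have hmono := (monic_normalize het0).coeff_natDegree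
      rw [hnd, hnorm, coeff_mul_C] at hmono
      exact hmono
    have hφval : φ t = (EuclideanDomain.gcd (g t) (q t)).coeff L * v := by
      rw [hφPL, hsP, hsPC, coeff_mul_C]
    intro i
    have h1 : (normalize (EuclideanDomain.gcd (g t) (q t))).coeff i
        = (EuclideanDomain.gcd (g t) (q t)).coeff i * wN := by
      rw [hnorm, coeff_mul_C]
    have h2 : (P t).coeff i = (EuclideanDomain.gcd (g t) (q t)).coeff i * v := by
      rw [hsP, hsPC, coeff_mul_C]
    rw [h1, h2, hφval]
    have h3 : ((EuclideanDomain.gcd (g t) (q t)).coeff L * v)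
        * ((EuclideanDomain.gcd (g t) (q t)).coeff i * wN)
        = (EuclideanDomain.gcd (g t) (q t)).coeff i * v := by
      linear_combination ((EuclideanDomain.gcd (g t) (q t)).coeff i * v) * hwval
    rw [← h3, inv_mul_cancel_left₀ (mul_ne_zero hlcet hv0)]
  refine ⟨V2, hV2open, ht0V2, hV2sub, fun t ht => (hkey t ht).1, fun i => ?_⟩
  have hdiff : DifferentiableOn ℂ (fun t => (φ t)⁻¹ * (P t).coeff i) V2 :=
    ((hφd.mono Set.inter_subset_left).inv (fun t ht => ht.2)).mul
      ((hPd i).mono Set.inter_subset_left)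
  exact hdiff.congr (fun t ht => (hkey t ht).2 i)

end GcdHolo

open GcdHolo

/-- Lemma 4.5 (complex analytic case): if `g_t`, `h_t`, `k_t` are families of polynomials
whose coefficients depend holomorphically on `t ∈ U ⊆ ℂ^N`, with `g_t ≠ 0` of constant
degree `m`, `deg h_t ≤ deg g_t`, `deg k_t ≤ deg g_t`, and the monic gcd
`l_t = normalize (gcd (gcd g_t h_t) k_t)` of the three has constant degree `L`, then the
coefficients of `l_t` depend holomorphically on `t`. -/
theorem gcd_three_holomorphic_dependence (N : ℕ) (U : Set (EuclideanSpace ℂ (Fin N)))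
    (hU : IsOpen U)
    (g h k : EuclideanSpace ℂ (Fin N) → Polynomial ℂ)
    (hg : ∀ i : ℕ, DifferentiableOn ℂ (fun t => (g t).coeff i) U)
    (hh : ∀ i : ℕ, DifferentiableOn ℂ (fun t => (h t).coeff i) U)
    (hk : ∀ i : ℕ, DifferentiableOn ℂ (fun t => (k t).coeff i) U)
    (m L : ℕ)
    (hgdeg : ∀ t ∈ U, g t ≠ 0 ∧ (g t).natDegree = m)
    (hhdeg : ∀ t ∈ U, (h t).degree ≤ (g t).degree)
    (hkdeg : ∀ t ∈ U, (k t).degree ≤ (g t).degree)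
    (hLdeg : ∀ t ∈ U,
      (normalize (EuclideanDomain.gcd (EuclideanDomain.gcd (g t) (h t)) (k t))).natDegree
        = L) :
    ∀ i : ℕ, DifferentiableOn ℂ
      (fun t =>
        (normalize
          (EuclideanDomain.gcd (EuclideanDomain.gcd (g t) (h t)) (k t))).coeff i) U := by
  classical
  intro i t0 ht0
  obtain ⟨hg0, hm0⟩ := hgdeg t0 ht0
  set E3 : EuclideanSpace ℂ (Fin N) → Polynomial ℂ :=
    fun t => EuclideanDomain.gcd (EuclideanDomain.gcd (g t) (h t)) (k t) with hE3
  have hE3ne : ∀ t ∈ U, E3 t ≠ 0 := by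
    intro t ht hcon
    exact (hgdeg t ht).1
      ((EuclideanDomain.gcd_eq_zero_iff.mp (EuclideanDomain.gcd_eq_zero_iff.mp hcon).1).1)
  have hE3dvdg : ∀ t, E3 t ∣ g t :=
    fun t => (EuclideanDomain.gcd_dvd_left _ _).trans (EuclideanDomain.gcd_dvd_left _ _)
  have hE3dvdh : ∀ t, E3 t ∣ h t :=
    fun t => (EuclideanDomain.gcd_dvd_left _ _).trans (EuclideanDomain.gcd_dvd_right _ _)
  have hE3dvdk : ∀ t, E3 t ∣ k t := fun t => EuclideanDomain.gcd_dvd_right _ _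
  set l : Polynomial ℂ := normalize (E3 t0) with hl
  have hl0 : l ≠ 0 := fun hcon => hE3ne t0 ht0 (normalize_eq_zero.mp hcon)
  have hldeg : l.natDegree = L := hLdeg t0 ht0
  have hldvdg : l ∣ g t0 := (associated_normalize _).symm.dvd.trans (hE3dvdg t0)
  have hldvdh : l ∣ h t0 := (associated_normalize _).symm.dvd.trans (hE3dvdh t0)
  have hldvdk : l ∣ k t0 := (associated_normalize _).symm.dvd.trans (hE3dvdk t0)
  have hLm : L ≤ m := by
    rw [← hldeg, ← hm0]
    exact Polynomial.natDegree_le_of_dvd hldvdg hg0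
  obtain ⟨G₁, hG₁⟩ := id hldvdg
  obtain ⟨H₁, hH₁⟩ := id hldvdh
  obtain ⟨K₁, hK₁⟩ := id hldvdk
  have hG₁0 : G₁ ≠ 0 := by rintro rfl; rw [mul_zero] at hG₁; exact hg0 hG₁
  have hG₁deg : G₁.natDegree = m - L := by
    have h1 : (g t0).natDegree = l.natDegree + G₁.natDegree := by
      rw [hG₁, Polynomial.natDegree_mul hl0 hG₁0]
    omega
  -- find a good coefficient cⱼ
  have hjex : ∃ j : Fin (m+1),
      (EuclideanDomain.gcd (g t0)
        (h t0 + Polynomial.C (((j:ℕ):ℂ)) * k t0)).natDegree = L := by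
    by_contra hno
    push_neg at hno
    have hroot : ∀ j : Fin (m+1), ∃ z : ℂ, G₁.IsRoot z
        ∧ (H₁ + Polynomial.C (((j:ℕ):ℂ)) * K₁).IsRoot z := by
      intro j
      set cj : ℂ := ((j:ℕ):ℂ) with hcj
      set ej := EuclideanDomain.gcd (g t0) (h t0 + Polynomial.C cj * k t0) with hej
      have hqj : h t0 + Polynomial.C cj * k t0 = l * (H₁ + Polynomial.C cj * K₁) := by
        rw [hH₁, hK₁]; ring
      have hldvd_ej : l ∣ ej :=
        EuclideanDomain.dvd_gcd hldvdg (by rw [hqj]; exact Dvd.intro _ rfl)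
      have hej0 : ej ≠ 0 := fun hcon => hg0 ((EuclideanDomain.gcd_eq_zero_iff.mp hcon).1)
      have hge : L ≤ ej.natDegree := by
        rw [← hldeg]; exact Polynomial.natDegree_le_of_dvd hldvd_ej hej0
      have hgt : L < ej.natDegree := lt_of_le_of_ne hge (fun hcon => hno j hcon.symm)
      obtain ⟨sj, hsj⟩ := hldvd_ej
      have hsj0 : sj ≠ 0 := by rintro rfl; rw [mul_zero] at hsj; exact hej0 hsj
      have hsjdeg : 0 < sj.natDegree := by
        have h1 : ej.natDegree = L + sj.natDegree := by
          rw [hsj, Polynomial.natDegree_mul hl0 hsj0, hldeg]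
        omega
      obtain ⟨z, hz⟩ := Complex.exists_root (Polynomial.natDegree_pos_iff_degree_pos.mp hsjdeg)
      refine ⟨z, ?_, ?_⟩
      · have hdvdG : l * sj ∣ l * G₁ := by
          rw [← hsj, ← hG₁]; exact EuclideanDomain.gcd_dvd_left _ _
        obtain ⟨c, hc⟩ := (mul_dvd_mul_iff_left hl0).mp hdvdG
        rw [Polynomial.IsRoot, hc, Polynomial.eval_mul, hz, zero_mul]
      · have hdvdQ : l * sj ∣ l * (H₁ + Polynomial.C cj * K₁) := by
          rw [← hsj, ← hqj]; exact EuclideanDomain.gcd_dvd_right _ _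
        obtain ⟨c, hc⟩ := (mul_dvd_mul_iff_left hl0).mp hdvdQ
        rw [Polynomial.IsRoot, hc, Polynomial.eval_mul, hz, zero_mul]
    have hcardlt : G₁.roots.toFinset.card < (Finset.univ : Finset (Fin (m+1))).card := by
      have h1 := Multiset.toFinset_card_le G₁.roots
      have h2 := Polynomial.card_roots' G₁
      rw [Finset.card_univ, Fintype.card_fin]
      omega
    have hmaps : ∀ j : Fin (m+1), j ∈ Finset.univ → (hroot j).choose ∈ G₁.roots.toFinset := by
      intro j _
      rw [Multiset.mem_toFinset, Polynomial.mem_roots hG₁0]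
      exact (hroot j).choose_spec.1
    obtain ⟨j1, -, j2, -, hne, heq⟩ :=
      Finset.exists_ne_map_eq_of_card_lt_of_maps_to hcardlt hmaps
    have h1 := (hroot j1).choose_spec
    have h2 := (hroot j2).choose_spec
    rw [heq] at h1
    set z : ℂ := (hroot j2).choose with hzdef
    have e1 := h1.2
    have e2 := h2.2
    rw [Polynomial.IsRoot, Polynomial.eval_add, Polynomial.eval_mul, Polynomial.eval_C] at e1 e2
    have hcne : ((j1:ℕ):ℂ) ≠ ((j2:ℕ):ℂ) := by
      intro hc
      exact hne (Fin.ext (Nat.cast_injective hc))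
    have hK0 : K₁.eval z = 0 := by
      have h3 : (((j1:ℕ):ℂ) - ((j2:ℕ):ℂ)) * K₁.eval z = 0 := by linear_combination e1 - e2
      rcases mul_eq_zero.mp h3 with h4 | h4
      · exact absurd (sub_eq_zero.mp h4) hcne
      · exact h4
    have hH0 : H₁.eval z = 0 := by linear_combination e1 - ((j1:ℕ):ℂ) * hK0
    have hdvd3 : l * (Polynomial.X - Polynomial.C z) ∣ E3 t0 := by
      apply EuclideanDomain.dvd_gcd
      · apply EuclideanDomain.dvd_gcd
        · rw [hG₁]
          exact mul_dvd_mul_left l (Polynomial.dvd_iff_isRoot.mpr h1.1)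
        · rw [hH₁]
          exact mul_dvd_mul_left l (Polynomial.dvd_iff_isRoot.mpr hH0)
      · rw [hK₁]
        exact mul_dvd_mul_left l (Polynomial.dvd_iff_isRoot.mpr hK0)
    have hle := Polynomial.natDegree_le_of_dvd hdvd3 (hE3ne t0 ht0)
    rw [Polynomial.natDegree_mul hl0 (Polynomial.X_sub_C_ne_zero z),
      Polynomial.natDegree_X_sub_C, hldeg] at hle
    have hE3L : (E3 t0).natDegree = L := by
      rw [← natDegree_normalize]; exact hLdeg t0 ht0
    omega
  obtain ⟨j, hj⟩ := hjex
  set cj : ℂ := ((j:ℕ):ℂ) with hcj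
  set qf : EuclideanSpace ℂ (Fin N) → Polynomial ℂ :=
    fun t => h t + Polynomial.C cj * k t with hqf
  have hqd : ∀ i' : ℕ, DifferentiableOn ℂ (fun t => (qf t).coeff i') U := by
    intro i'
    have hexp : (fun t => (qf t).coeff i')
        = fun t => (h t).coeff i' + cj * (k t).coeff i' := by
      funext t
      show (h t + Polynomial.C cj * k t).coeff i' = _
      rw [Polynomial.coeff_add, Polynomial.coeff_C_mul]
    rw [hexp]
    exact (hh i').add ((differentiableOn_const _).mul (hk i'))
  have hqdeg : ∀ t ∈ U, (qf t).degree ≤ (g t).degree := by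
    intro t ht
    refine (Polynomial.degree_add_le _ _).trans (max_le (hhdeg t ht) ?_)
    refine (Polynomial.degree_mul_le _ _).trans ?_
    refine le_trans (add_le_add Polynomial.degree_C_le le_rfl) ?_
    rw [zero_add]
    exact hkdeg t ht
  have hLle' : ∀ t ∈ U, L ≤ (EuclideanDomain.gcd (g t) (qf t)).natDegree := by
    intro t ht
    have hdvd : normalize (E3 t) ∣ EuclideanDomain.gcd (g t) (qf t) := by
      apply EuclideanDomain.dvd_gcd
      · exact (associated_normalize _).symm.dvd.trans (hE3dvdg t)
      · refine (associated_normalize _).symm.dvd.trans ?_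
        show E3 t ∣ h t + Polynomial.C cj * k t
        exact dvd_add (hE3dvdh t) ((hE3dvdk t).mul_left _)
    have hgcd0 : EuclideanDomain.gcd (g t) (qf t) ≠ 0 :=
      fun hcon => (hgdeg t ht).1 ((EuclideanDomain.gcd_eq_zero_iff.mp hcon).1)
    have h5 := Polynomial.natDegree_le_of_dvd hdvd hgcd0
    rw [hLdeg t ht] at h5
    exact h5
  obtain ⟨W, hWopen, ht0W, hWsub, hWdeg, hWdiff⟩ :=
    two_poly_local hU g qf hg hqd m L hgdeg hqdeg hLle' ht0 hj
  have hident : ∀ t ∈ W, normalize (E3 t)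
      = normalize (EuclideanDomain.gcd (g t) (qf t)) := by
    intro t ht
    have htU := hWsub ht
    have hgcd0 : EuclideanDomain.gcd (g t) (qf t) ≠ 0 :=
      fun hcon => (hgdeg t htU).1 ((EuclideanDomain.gcd_eq_zero_iff.mp hcon).1)
    apply monic_dvd_eq (Polynomial.monic_normalize (hE3ne t htU))
      (Polynomial.monic_normalize hgcd0)
    · refine dvd_trans ?_ (associated_normalize _).dvd
      apply EuclideanDomain.dvd_gcd
      · exact (associated_normalize _).symm.dvd.trans (hE3dvdg t)
      · refine (associated_normalize _).symm.dvd.trans ?_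
        show E3 t ∣ h t + Polynomial.C cj * k t
        exact dvd_add (hE3dvdh t) ((hE3dvdk t).mul_left _)
    · rw [natDegree_normalize, hWdeg t ht, hLdeg t htU]
  have hfinal : DifferentiableOn ℂ (fun t => (normalize (E3 t)).coeff i) W :=
    (hWdiff i).congr (fun t ht => by rw [hident t ht])
  exact (hfinal.differentiableAt (hWopen.mem_nhds ht0W)).differentiableWithinAt
end

section
/- Let a, p₀, p₁, p₂ be polynomials over ℂ with a ≠ 0, p₀ squarefree of positive degree, and suppose p₀, p₁, p₂ have no common root, i.e. there is no x ∈ ℂ with p₀(x) = p₁(x) = p₂(x) = 0. If a divides the Wronskian W(p₀,p₁) = p₀·p₁' − p₁·p₀' and a divides W(p₀,p₂) = p₀·p₂' − p₂·p₀', then a and p₀ are coprime (IsCoprime a p₀). -/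
/-! At a common root `x` of `a` and the squarefree (hence separable) `p₀`, the Wronskian
`W(p₀, q)` takes the value `-p₀'(x) q(x)` with `p₀'(x) ≠ 0`; since `a ∣ W(p₀, pᵢ)`, this forces
`p₁(x) = p₂(x) = 0`, a common root of `p₀, p₁, p₂`. -/

open Polynomial

theorem Polynomial.Separable.eval_eq_zero_of_dvd_wronskian {R : Type*} [CommRing R] [IsDomain R]
    {a p q : R[X]} (hp : p.Separable) (h : a ∣ wronskian p q) {x : R} (hpx : p.eval x = 0)
    (hax : a.eval x = 0) : q.eval x = 0 := by
  obtain ⟨c, hc⟩ := h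
  have hW : (derivative p).eval x * q.eval x = 0 := by
    simpa [wronskian, hpx, hax] using congrArg (eval x) hc
  exact (mul_eq_zero.mp hW).resolve_left (hp.eval₂_derivative_ne_zero (RingHom.id R) hpx)

theorem ramification_divisor_coprime_general (a p₀ p₁ p₂ : Polynomial ℂ)
    (hp₀sq : Squarefree p₀)
    (hnocommon : ¬ ∃ x : ℂ, p₀.eval x = 0 ∧ p₁.eval x = 0 ∧ p₂.eval x = 0)
    (h1 : a ∣ p₀ * derivative p₁ - p₁ * derivative p₀)
    (h2 : a ∣ p₀ * derivative p₂ - p₂ * derivative p₀) :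
    IsCoprime a p₀ := by
  have hsep : p₀.Separable := PerfectField.separable_iff_squarefree.mpr hp₀sq
  have hW : ∀ q, wronskian p₀ q = p₀ * derivative q - q * derivative p₀ := fun q ↦ by
    rw [wronskian, mul_comm (derivative p₀)]
  rw [isCoprime_iff_aeval_ne_zero_of_isAlgClosed (k := ℂ) ℂ]
  intro x
  simp only [coe_aeval_eq_eval]
  by_contra! ⟨hax, hp₀x⟩
  exact hnocommon ⟨x, hp₀x, hsep.eval_eq_zero_of_dvd_wronskian (hW p₁ ▸ h1) hp₀x hax,
    hsep.eval_eq_zero_of_dvd_wronskian (hW p₂ ▸ h2) hp₀x hax⟩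

/-- The coprimality claim in the proof of Proposition 3.1: if `a ≠ 0`, `p₀` is
squarefree of positive degree, `p₀`, `p₁`, `p₂` have no common root, and `a` divides the
Wronskians `W(p₀,p₁)` and `W(p₀,p₂)`, then `a` and `p₀` are coprime. -/
theorem ramification_divisor_coprime (a p₀ p₁ p₂ : Polynomial ℂ) (ha : a ≠ 0)
    (hp₀sq : Squarefree p₀) (hp₀deg : 0 < p₀.degree)
    (hnocommon : ¬ ∃ x : ℂ, p₀.eval x = 0 ∧ p₁.eval x = 0 ∧ p₂.eval x = 0)
    (h1 : a ∣ p₀ * derivative p₁ - p₁ * derivative p₀)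
    (h2 : a ∣ p₀ * derivative p₂ - p₂ * derivative p₀) :
    IsCoprime a p₀ :=
  ramification_divisor_coprime_general a p₀ p₁ p₂ hp₀sq hnocommon h1 h2
end

section
/- Let p₀ and p be polynomials over ℂ, α ∈ ℂ, with p₀.eval α ≠ 0, p ≠ 0, and let K = rootMultiplicity α p with K ≥ 1. Then p₀·p' − p₀'·p ≠ 0 and rootMultiplicity α (p₀·p' − p₀'·p) = K − 1. -/
/-!
Write `p = (X - α)^K q` with `q(α) ≠ 0`. Then the Wronskian factors as
`W(p₀, p) = (X - α)^(K-1) (K p₀ q + (X - α) W(p₀, q))`, and the second factor takes the value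
`K p₀(α) q(α)` at `α`, which is nonzero in characteristic zero.
-/

open Polynomial

namespace Polynomial

variable {R : Type*} [CommRing R]

theorem wronskian_X_sub_C_pow_succ_mul (f q : R[X]) (a : R) (n : ℕ) :
    wronskian f ((X - C a) ^ (n + 1) * q) =
      (X - C a) ^ n * (C ((n + 1 : ℕ) : R) * f * q + (X - C a) * wronskian f q) := by
  rw [wronskian, wronskian, derivative_mul, derivative_X_sub_C_pow, Nat.add_sub_cancel]
  ring

theorem ne_zero_of_not_isRoot {g : R[X]} {a : R} (hg : ¬g.IsRoot a) : g ≠ 0 := by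
  rintro rfl
  exact hg eval_zero

theorem rootMultiplicity_X_sub_C_pow_mul_of_not_isRoot {g : R[X]} {a : R} (hg : ¬g.IsRoot a)
    (n : ℕ) : rootMultiplicity a ((X - C a) ^ n * g) = n := by
  rw [mul_comm, rootMultiplicity_mul_X_sub_C_pow (ne_zero_of_not_isRoot hg),
    rootMultiplicity_eq_zero hg, zero_add]

variable [IsDomain R] [CharZero R]

theorem exists_wronskian_eq_X_sub_C_pow_mul {f p : R[X]} {a : R} (hf : ¬f.IsRoot a)
    (hp : p ≠ 0) (hpa : p.IsRoot a) :
    ∃ g : R[X], ¬g.IsRoot a ∧ wronskian f p = (X - C a) ^ (rootMultiplicity a p - 1) * g := by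
  obtain ⟨n, hn⟩ := Nat.exists_eq_add_one.mpr ((rootMultiplicity_pos hp).mpr hpa)
  set q := p /ₘ (X - C a) ^ rootMultiplicity a p
  have hq : ¬q.IsRoot a := eval_divByMonic_pow_rootMultiplicity_ne_zero a hp
  refine ⟨C ((n + 1 : ℕ) : R) * f * q + (X - C a) * wronskian f q, ?_, ?_⟩
  · simp only [IsRoot, eval_add, eval_mul, eval_C, eval_sub, eval_X, sub_self, zero_mul, add_zero]
    exact mul_ne_zero (mul_ne_zero (Nat.cast_ne_zero.mpr n.succ_ne_zero) hf) hq
  · rw [hn, Nat.add_sub_cancel, ← wronskian_X_sub_C_pow_succ_mul, ← hn,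
      pow_mul_divByMonic_rootMultiplicity_eq]

end Polynomial

/-- Key computation in the proof of Lemma 3.3: if `p₀(α) ≠ 0`, `p ≠ 0` and `α` is a root
of `p` of multiplicity exactly `K ≥ 1`, then `p₀ p' - p₀' p` is nonzero and has `α` as a
root of multiplicity exactly `K - 1`. -/
theorem rootMultiplicity_wronskian (p₀ p : Polynomial ℂ) (α : ℂ)
    (hp₀ : p₀.eval α ≠ 0) (hp : p ≠ 0)
    (K : ℕ) (hKdef : K = rootMultiplicity α p) (hK : 1 ≤ K) :
    p₀ * derivative p - derivative p₀ * p ≠ 0 ∧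
    rootMultiplicity α (p₀ * derivative p - derivative p₀ * p) = K - 1 := by
  obtain ⟨g, hg, hW⟩ := exists_wronskian_eq_X_sub_C_pow_mul hp₀ hp
    ((rootMultiplicity_pos hp).mp (hKdef ▸ hK))
  rw [← wronskian, hW, hKdef]
  exact ⟨mul_ne_zero (pow_ne_zero _ (X_sub_C_ne_zero α)) (ne_zero_of_not_isRoot hg),
    rootMultiplicity_X_sub_C_pow_mul_of_not_isRoot hg _⟩
end
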